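/- arXiv:2409.14788 — 6 statements merged into one kernel-verified Lean document; each statement's English description precedes it below -/
import Mathlib

section
/- Let a be an integer with a ≥ 2. Then the series ∑_{n=2}^∞ 1/(a·n·(n−2)+1) converges and equals 1/(2(a−1)) − (π/(2√(a²−a)))·cot(√(a²−a)·π/a). -/
/-!
Completing the square, `a·n·(n+2) + 1 = a·((n+1)² − x²)` with `x = √(a²−a)/a ∈ (0,1)`, so the
series is `1/a · ∑_{m≥1} 1/(m² − x²)`, which the Mittag-Leffler expansion
`π cot (π x) = 1/x + ∑_{m≥1} 2x/(x² − m²)` evaluates.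
-/

open Real

theorem Real.hasSum_cot_partial_fractions {x : ℝ} (hx : ∀ n : ℤ, x ≠ n) :
    HasSum (fun n : ℕ => 1 / (x - (n + 1)) + 1 / (x + (n + 1))) (π * cot (π * x) - 1 / x) := by
  have hz : (x : ℂ) ∈ Complex.integerComplement := by
    rintro ⟨n, hn⟩
    exact hx n (by exact_mod_cast hn.symm)
  have h := (Summable.hasSum_iff_tendsto_nat (summable_cotTerm hz)).mpr
    (tendsto_logDeriv_euler_cot_sub hz)
  rw [← Complex.hasSum_ofReal]
  push_cast
  simpa [cotTerm, Complex.ofReal_cot] using h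

theorem Real.hasSum_one_div_nat_add_one_sq_sub_sq {x : ℝ} (hx : ∀ n : ℤ, x ≠ n) :
    HasSum (fun n : ℕ => 1 / (((n : ℝ) + 1) ^ 2 - x ^ 2))
      (1 / (2 * x ^ 2) - π * cot (π * x) / (2 * x)) := by
  have hx0 : x ≠ 0 := by simpa using hx 0
  have hsum : (fun n : ℕ => 1 / (((n : ℝ) + 1) ^ 2 - x ^ 2)) =
      fun n : ℕ => -1 / (2 * x) * (1 / (x - (n + 1)) + 1 / (x + (n + 1))) := by
    ext n
    have h₁ : x - (n + 1) ≠ 0 := fun h => hx (n + 1) (by push_cast; linarith)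
    have h₂ : x + (n + 1) ≠ 0 := fun h => hx (-(n + 1)) (by push_cast; linarith)
    have h₃ : ((n : ℝ) + 1) ^ 2 - x ^ 2 ≠ 0 := by
      rw [sq_sub_sq]; exact mul_ne_zero (by contrapose! h₂; linarith) (by contrapose! h₁; linarith)
    field_simp
    ring
  have hval : 1 / (2 * x ^ 2) - π * cot (π * x) / (2 * x) =
      -1 / (2 * x) * (π * cot (π * x) - 1 / x) := by
    field_simp
    ring
  rw [hsum, hval]
  exact (hasSum_cot_partial_fractions hx).mul_left _

theorem hasSum_one_div_mul_nat_add_two_mul_nat_add_one {a : ℝ} (ha : 1 < a) :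
    HasSum (fun n : ℕ => 1 / (a * (n + 2) * n + 1))
      (1 / (2 * (a - 1)) - π / (2 * √(a ^ 2 - a)) * cot (√(a ^ 2 - a) * π / a)) := by
  have ha0 : 0 < a := by linarith
  have hs : √(a ^ 2 - a) ^ 2 = a ^ 2 - a := Real.sq_sqrt (by nlinarith)
  have hs0 : 0 < √(a ^ 2 - a) := Real.sqrt_pos.mpr (by nlinarith)
  set x := √(a ^ 2 - a) / a with hx
  have hx0 : 0 < x := by positivity
  have hx2 : x ^ 2 = (a - 1) / a := by
    rw [hx, div_pow, hs]
    field_simp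
  have hx1 : x < 1 := by
    have : x ^ 2 < 1 := by rw [hx2, div_lt_one ha0]; linarith
    nlinarith
  have hxZ : ∀ n : ℤ, x ≠ n := by
    intro n hn
    rw [hn] at hx0 hx1
    have h0 : (0 : ℤ) < n := by exact_mod_cast hx0
    have h1 : n < 1 := by exact_mod_cast hx1
    omega
  have hterm : (fun n : ℕ => 1 / (a * (n + 2) * n + 1)) =
      fun n : ℕ => 1 / a * (1 / (((n : ℝ) + 1) ^ 2 - x ^ 2)) := by
    ext n
    have hpos : 0 < a * (n + 2) * n + 1 := by positivity
    have hden : ((n : ℝ) + 1) ^ 2 - x ^ 2 = (a * (n + 2) * n + 1) / a := by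
      rw [hx2]
      field_simp
      ring
    rw [hden]
    field_simp
  have hval : 1 / (2 * (a - 1)) - π / (2 * √(a ^ 2 - a)) * cot (√(a ^ 2 - a) * π / a) =
      1 / a * (1 / (2 * x ^ 2) - π * cot (π * x) / (2 * x)) := by
    rw [hx2, hx, mul_div_assoc', mul_comm π]
    field_simp
  rw [hterm, hval]
  exact (Real.hasSum_one_div_nat_add_one_sq_sub_sq hxZ).mul_left _

/-- For an integer `a ≥ 2`, the series `∑_{n=2}^∞ 1/(a·n·(n−2)+1)` converges and equals
`1/(2(a−1)) − (π/(2√(a²−a)))·cot(√(a²−a)·π/a)`. -/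
theorem twoStepStar_reciprocal_sum (a : ℤ) (ha : 2 ≤ a) :
    HasSum (fun n : ℕ => 1 / ((a : ℝ) * (n + 2) * n + 1))
      (1 / (2 * ((a : ℝ) - 1)) -
        π / (2 * Real.sqrt ((a : ℝ) ^ 2 - a)) *
          Real.cot (Real.sqrt ((a : ℝ) ^ 2 - a) * π / a)) :=
  hasSum_one_div_mul_nat_add_two_mul_nat_add_one (by exact_mod_cast ha)
end

section
/- Let a and n be integers with a ≥ 8, a ≡ 0 (mod 4), n ≥ 3, and a(n−2) ≥ 4n. Then the Frobenius number of the triple {S_{a,n}, S_{a,n+1}, S_{a,n+2}} equals (2n−2)·S_{a,n+1} + ((a(n−2)+4(n−1))/4)·S_{a,n+2} − S_{a,n}. -/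
/-!
Write `n = p + 3`, `a = 4q`, `s = q(p + 1) - (p + 3)` and `A, B, C` for the three star numbers.
Then `(2p+5)B + (s+1)C`, `(2p+6+s)C - (2p+7)B` and `(4p+12)B - (2p+5)C` are positive
multiples of `A`, so any `xB + yC` can be lowered by multiples of `A` until `(x, y)` lies in the
staircase `{x < 4p+12, y < s+1} ∪ {x < 2p+5, y < 2p+6+s}`. Since `gcd(A, B, C) = 1` the
staircase meets every residue class modulo `A`, and it has exactly `A` points, so it is a
system of Apéry representatives: the least `xB + yC` in each class. The Frobenius number is
the largest of them, at the corner `(2p+4, 2p+5+s)`, minus `A`.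
-/

/-- The 2-step star number `S_{a,n} = a·n·(n−2) + 1`. -/
def twoStepStar (a n : ℕ) : ℕ := a * n * (n - 2) + 1

open Finset

def staircase (D E r : ℕ) : Finset (ℕ × ℕ) :=
  range E ×ˢ range r ∪ range D ×ˢ Ico r (D + r)

lemma mem_staircase {D E r x y : ℕ} :
    (x, y) ∈ staircase D E r ↔ x < E ∧ y < r ∨ x < D ∧ r ≤ y ∧ y < D + r := by
  simp [staircase]

lemma card_staircase (D E r : ℕ) : #(staircase D E r) = E * r + D * D := by
  rw [staircase, card_union_of_disjoint, card_product, card_product, card_range, card_range,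
    card_range, Nat.card_Ico, Nat.add_sub_cancel]
  rw [disjoint_left]
  rintro ⟨x, y⟩ h₁ h₂
  simp only [mem_product, mem_range, mem_Ico] at h₁ h₂
  omega

theorem AddSubmonoid.mem_closure_triple {M : Type*} [AddCommMonoid M] {a b c n : M} :
    n ∈ closure ({a, b, c} : Set M) ↔ ∃ u x y : ℕ, u • a + x • b + y • c = n := by
  rw [← Set.singleton_union, closure_union, mem_sup]
  simp_rw [mem_closure_singleton, mem_closure_pair]
  constructor
  · rintro ⟨_, ⟨u, rfl⟩, _, ⟨x, y, rfl⟩, rfl⟩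
    exact ⟨u, x, y, add_assoc ..⟩
  · rintro ⟨u, x, y, rfl⟩
    exact ⟨_, ⟨u, rfl⟩, _, ⟨x, y, rfl⟩, (add_assoc ..).symm⟩

/-- Each relation moves a pair `(x, y)` outside `staircase D E r` towards it while lowering
`x * B + y * C` by a positive multiple of `A`. -/
structure StaircaseRelations (A B C D E r : ℕ) : Prop where
  pos : 0 < A
  subtract : ∃ k > 0, D * B + r * C = k * A
  trade_C_for_B : ∃ k > 0, (D + r) * C = (E - D) * B + k * A
  trade_B_for_C : ∃ k > 0, E * B = D * C + k * A

namespace StaircaseRelations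

variable {A B C D E r : ℕ}

theorem exists_mem_staircase (h : StaircaseRelations A B C D E r) (x y : ℕ) :
    ∃ v ∈ staircase D E r, ∃ k, x * B + y * C = v.1 * B + v.2 * C + k * A := by
  induction hw : x * B + y * C using Nat.strong_induction_on generalizing x y with
  | _ w ih =>
  have descend : ∀ x₀ y₀ k, 0 < k → w = x₀ * B + y₀ * C + k * A →
      ∃ v ∈ staircase D E r, ∃ k, w = v.1 * B + v.2 * C + k * A := by
    intro x₀ y₀ k hk hw₀
    obtain ⟨v, hv, k', hk'⟩ := ih _ (by nlinarith [h.pos]) x₀ y₀ rfl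
    exact ⟨v, hv, k' + k, by rw [hw₀, hk']; ring⟩
  obtain ⟨k₁, hk₁, h₁⟩ := h.subtract
  obtain ⟨k₂, hk₂, h₂⟩ := h.trade_C_for_B
  obtain ⟨k₃, hk₃, h₃⟩ := h.trade_B_for_C
  subst hw
  by_cases hE : E ≤ x
  · obtain ⟨x₀, rfl⟩ := Nat.exists_eq_add_of_le' hE
    exact descend x₀ (y + D) k₃ hk₃ (by linarith)
  by_cases hDr : D ≤ x ∧ r ≤ y
  · obtain ⟨x₀, rfl⟩ := Nat.exists_eq_add_of_le' hDr.1
    obtain ⟨y₀, rfl⟩ := Nat.exists_eq_add_of_le' hDr.2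
    exact descend x₀ y₀ k₁ hk₁ (by linarith)
  by_cases hDr' : D + r ≤ y
  · obtain ⟨y₀, rfl⟩ := Nat.exists_eq_add_of_le' hDr'
    exact descend (x + (E - D)) y₀ k₂ hk₂ (by linarith)
  exact ⟨(x, y), mem_staircase.2 (by omega), 0, by ring⟩

theorem exists_mem_staircase_modEq (h : StaircaseRelations A B C D E r)
    (hgcd : Nat.setGcd {A, B, C} = 1) (N : ℕ) :
    ∃ v ∈ staircase D E r, v.1 * B + v.2 * C ≡ N [MOD A] := by
  obtain ⟨N₀, hN₀⟩ := Nat.exists_mem_closure_of_ge ({A, B, C} : Set ℕ)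
  obtain ⟨u, x, y, hxy⟩ := AddSubmonoid.mem_closure_triple.1 <|
    hN₀ (N + N₀ * A) (by nlinarith [h.pos]) (hgcd ▸ one_dvd _)
  simp only [smul_eq_mul] at hxy
  obtain ⟨v, hv, k, hk⟩ := h.exists_mem_staircase x y
  refine ⟨v, hv, ?_⟩
  have : N + N₀ * A = v.1 * B + v.2 * C + (u + k) * A := by rw [← hxy, add_assoc, hk]; ring
  simpa [Nat.ModEq, Nat.add_mul_mod_self_right] using (congrArg (· % A) this).symm

theorem injOn_mod (h : StaircaseRelations A B C D E r) (hgcd : Nat.setGcd {A, B, C} = 1)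
    (hcard : #(staircase D E r) ≤ A) :
    Set.InjOn (fun v : ℕ × ℕ ↦ (v.1 * B + v.2 * C) % A) (staircase D E r) := by
  refine injOn_of_surjOn_of_card_le _ (t := range A)
    (fun v _ ↦ mem_coe.2 (mem_range.2 (Nat.mod_lt _ h.pos))) (fun N hN ↦ ?_)
    (by rwa [card_range])
  obtain ⟨v, hv, hvN⟩ := h.exists_mem_staircase_modEq hgcd N
  exact ⟨v, hv, Eq.trans hvN (Nat.mod_eq_of_lt (mem_range.1 hN))⟩

theorem le_of_modEq (h : StaircaseRelations A B C D E r) (hgcd : Nat.setGcd {A, B, C} = 1)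
    (hcard : #(staircase D E r) ≤ A) {v₀ : ℕ × ℕ} (hv₀ : v₀ ∈ staircase D E r)
    {x y : ℕ} (hxy : x * B + y * C ≡ v₀.1 * B + v₀.2 * C [MOD A]) :
    v₀.1 * B + v₀.2 * C ≤ x * B + y * C := by
  obtain ⟨v, hv, k, hk⟩ := h.exists_mem_staircase x y
  have hvv₀ : v = v₀ := h.injOn_mod hgcd hcard hv hv₀ <| by
    have : x * B + y * C ≡ v.1 * B + v.2 * C [MOD A] := by
      rw [hk]; exact Nat.add_mul_mod_self_right ..
    exact this.symm.trans hxy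
  subst hvv₀
  omega

theorem frobeniusNumber (h : StaircaseRelations A B C D E r) (hgcd : Nat.setGcd {A, B, C} = 1)
    (hcard : #(staircase D E r) ≤ A) {v₀ : ℕ × ℕ} (hv₀ : v₀ ∈ staircase D E r)
    (hmax : ∀ v ∈ staircase D E r, v.1 * B + v.2 * C ≤ v₀.1 * B + v₀.2 * C)
    (hA : A ≤ v₀.1 * B + v₀.2 * C) :
    FrobeniusNumber (v₀.1 * B + v₀.2 * C - A) {A, B, C} := by
  rw [frobeniusNumber_iff]
  constructor
  · intro hmem
    obtain ⟨u, x, y, hxy⟩ := AddSubmonoid.mem_closure_triple.1 hmem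
    simp only [smul_eq_mul] at hxy
    have hmod : x * B + y * C ≡ v₀.1 * B + v₀.2 * C [MOD A] := by
      rw [show v₀.1 * B + v₀.2 * C = x * B + y * C + (u + 1) * A by
        rw [add_one_mul]; omega]
      exact (Nat.add_mul_mod_self_right ..).symm
    have := h.le_of_modEq hgcd hcard hv₀ hmod
    have := h.pos
    omega
  · intro N hN
    obtain ⟨v, hv, hvN⟩ := h.exists_mem_staircase_modEq hgcd N
    have hle : v.1 * B + v.2 * C ≤ N := hvN.le_of_lt_add (by have := hmax v hv; omega)
    obtain ⟨t, ht⟩ := (Nat.modEq_iff_dvd' hle).1 hvN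
    refine AddSubmonoid.mem_closure_triple.2 ⟨t, v.1, v.2, ?_⟩
    simp only [smul_eq_mul]
    rw [mul_comm, ← ht]
    omega

end StaircaseRelations

lemma twoStepStar_add_two (a k : ℕ) : twoStepStar a (k + 2) = a * (k + 2) * k + 1 := by
  simp [twoStepStar]

theorem setGcd_twoStepStar_eq_one (a n : ℕ) (hn : 2 ≤ n) :
    Nat.setGcd {twoStepStar a n, twoStepStar a (n + 1), twoStepStar a (n + 2)} = 1 := by
  obtain ⟨k, rfl⟩ := Nat.exists_eq_add_of_le' hn
  set A := twoStepStar a (k + 2)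
  set B := twoStepStar a (k + 2 + 1)
  set C := twoStepStar a (k + 2 + 2)
  have hd {m : ℕ} (hm : m ∈ ({A, B, C} : Set ℕ)) : (Nat.setGcd {A, B, C} : ℤ) ∣ m :=
    Int.natCast_dvd_natCast.2 (Nat.setGcd_dvd_of_mem hm)
  -- `B - A = a (2k + 3)` and `C - 2B + A = 2a` combine to `a`, and `A = a (k + 2) k + 1`.
  have hbezout : (1 : ℤ) = A * (1 + (k + 2) * k * (k + 2)) - B * ((k + 2) * k * (2 * k + 3))
      + C * ((k + 2) * k * (k + 1)) := by
    simp only [A, B, C, twoStepStar_add_two]; push_cast; ring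
  have h1 : (Nat.setGcd {A, B, C} : ℤ) ∣ 1 := by
    rw [hbezout]
    exact dvd_add (dvd_sub (dvd_mul_of_dvd_left (hd (by simp)) _)
      (dvd_mul_of_dvd_left (hd (by simp)) _)) (dvd_mul_of_dvd_left (hd (by simp)) _)
  exact Nat.dvd_one.1 (by exact_mod_cast h1)

theorem staircaseRelations_twoStepStar {p q s : ℕ} (hqs : q * (p + 1) = p + 3 + s) :
    StaircaseRelations (twoStepStar (4 * q) (p + 3)) (twoStepStar (4 * q) (p + 4))
      (twoStepStar (4 * q) (p + 5)) (2 * p + 5) (4 * p + 12) (s + 1) := by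
  obtain ⟨q, rfl⟩ : ∃ q', q = q' + 1 := Nat.exists_eq_add_one.2 (by nlinarith)
  simp only [twoStepStar_add_two]
  refine ⟨by positivity, ⟨2 * p + 6 + s + 4 * (q + 1), by omega, ?_⟩,
    ⟨s + 4 * q + 3, by omega, ?_⟩, ⟨2 * p + 7, by omega, ?_⟩⟩
  · nlinarith
  · rw [show 4 * p + 12 - (2 * p + 5) = 2 * p + 7 by omega]; nlinarith
  · ring

theorem le_corner_of_mem_staircase {p q s x y : ℕ} (hq : 0 < q)
    (hxy : (x, y) ∈ staircase (2 * p + 5) (4 * p + 12) (s + 1)) :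
    x * twoStepStar (4 * q) (p + 4) + y * twoStepStar (4 * q) (p + 5) ≤
      (2 * p + 4) * twoStepStar (4 * q) (p + 4) +
        (2 * p + 5 + s) * twoStepStar (4 * q) (p + 5) := by
  rcases mem_staircase.1 hxy with ⟨hx, hy⟩ | ⟨hx, -, hy⟩
  · have hBC : (2 * p + 7) * twoStepStar (4 * q) (p + 4) ≤
        (2 * p + 5) * twoStepStar (4 * q) (p + 5) := by
      obtain ⟨q, rfl⟩ := Nat.exists_eq_add_of_lt hq
      simp only [twoStepStar_add_two]; ring_nf; omega
    calc x * twoStepStar (4 * q) (p + 4) + y * twoStepStar (4 * q) (p + 5)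
        ≤ (4 * p + 11) * twoStepStar (4 * q) (p + 4) + s * twoStepStar (4 * q) (p + 5) := by
          gcongr <;> omega
      _ ≤ _ := by nlinarith
  · gcongr <;> omega

theorem frobenius_twoStepStar_zero_mod_four_general (a n : ℕ) (ha4 : a % 4 = 0) (hn : 3 ≤ n) (hbig : 4 * n ≤ a * (n - 2)) :
    ∃ g : ℕ,
      FrobeniusNumber g
        {twoStepStar a n, twoStepStar a (n + 1), twoStepStar a (n + 2)} ∧
      (g : ℚ) = (2 * (n : ℚ) - 2) * twoStepStar a (n + 1) + (((a : ℚ) * ((n : ℚ) - 2) + 4 * ((n : ℚ) - 1)) / 4) * twoStepStar a (n + 2) - twoStepStar a n := by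
  obtain ⟨p, rfl⟩ : ∃ p, n = p + 3 := ⟨n - 3, by omega⟩
  obtain ⟨q, rfl⟩ : ∃ q, a = 4 * q := ⟨a / 4, by omega⟩
  obtain ⟨s, hqs⟩ : ∃ s, q * (p + 1) = p + 3 + s :=
    Nat.exists_eq_add_of_le (by rw [show p + 3 - 2 = p + 1 by omega] at hbig; linarith)
  have hq : 0 < q := by nlinarith
  have hcorner : (2 * p + 4, 2 * p + 5 + s) ∈ staircase (2 * p + 5) (4 * p + 12) (s + 1) :=
    mem_staircase.2 (by omega)
  have hcard : #(staircase (2 * p + 5) (4 * p + 12) (s + 1)) ≤ twoStepStar (4 * q) (p + 3) := by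
    rw [card_staircase]
    simp only [twoStepStar_add_two]
    nlinarith
  have hA : twoStepStar (4 * q) (p + 3) ≤
      (2 * p + 4) * twoStepStar (4 * q) (p + 4) +
        (2 * p + 5 + s) * twoStepStar (4 * q) (p + 5) := by
    calc twoStepStar (4 * q) (p + 3) ≤ twoStepStar (4 * q) (p + 5) := by
          simp only [twoStepStar_add_two]; gcongr <;> omega
      _ ≤ (2 * p + 5 + s) * twoStepStar (4 * q) (p + 5) := Nat.le_mul_of_pos_left _ (by omega)
      _ ≤ _ := Nat.le_add_left _ _
  refine ⟨_, (staircaseRelations_twoStepStar hqs).frobeniusNumber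
    (setGcd_twoStepStar_eq_one _ _ (by omega)) hcard hcorner
    (fun v hv ↦ le_corner_of_mem_staircase hq hv) hA, ?_⟩
  have hqsQ : (q : ℚ) * (p + 1) = p + 3 + s := by exact_mod_cast hqs
  rw [Nat.cast_sub hA]
  push_cast
  linear_combination -(twoStepStar (4 * q) (p + 5) : ℚ) * hqsQ

theorem frobenius_twoStepStar_zero_mod_four (a n : ℕ) (ha : 8 ≤ a) (ha4 : a % 4 = 0) (hn : 3 ≤ n) (hbig : 4 * n ≤ a * (n - 2)) :
    ∃ g : ℕ,
      FrobeniusNumber g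
        {twoStepStar a n, twoStepStar a (n + 1), twoStepStar a (n + 2)} ∧
      (g : ℚ) = (2 * (n : ℚ) - 2) * twoStepStar a (n + 1) + (((a : ℚ) * ((n : ℚ) - 2) + 4 * ((n : ℚ) - 1)) / 4) * twoStepStar a (n + 2) - twoStepStar a n :=
  frobenius_twoStepStar_zero_mod_four_general a n ha4 hn hbig
end

section
/- Let a and n be integers with a ≥ 5, a ≡ 1 (mod 4), n ≥ 3, n ≡ 0 (mod 4), and a(n−2) ≥ 8n−2. Then the Frobenius number of the triple {S_{a,n}, S_{a,n+1}, S_{a,n+2}} equals (4n−2)·S_{a,n+1} + ((a(n−2)−2)/4)·S_{a,n+2} − S_{a,n}. -/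
/-!
Put `n = p + 2` and `a p = 4q + 2`, so that `s := S_{a,n} = (4p+8) q + 2p + 5`,
`S_{a,n+1} = s + a (2p+3)` and `S_{a,n+2} = s + a (4p+8)`. Hence
`x S_{a,n+1} + y S_{a,n+2} = s (x + y) + a w(x, y)` with the weight `w(x, y) = (2p+3) x + (4p+8) y`,
and since `a` is invertible mod `s`, the residue of such a sum mod `s` is fixed by its weight.
Every residue mod `s` is the weight of some `(x, y)` with `w(x, y) ≤ w(4p+6, q)` and
`x + y ≤ 4p + 6 + q`, while every `(x, y)` with `w(x, y) ≡ w(4p+6, q)` dominates `(4p+6, q)` in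
both respects. So `G = (4p+6) S_{a,n+1} + q S_{a,n+2}` is the largest element of the Apéry set
with respect to `s`, and the Frobenius number is `G - s`.
-/

theorem AddSubmonoid.mem_closure_triple_s5 {x y z k : ℕ} :
    k ∈ closure ({x, y, z} : Set ℕ) ↔ ∃ α β γ : ℕ, α * x + β * y + γ * z = k := by
  rw [← Set.singleton_union, closure_union, mem_sup]
  simp_rw [mem_closure_singleton, mem_closure_pair, exists_exists_eq_and, smul_eq_mul, add_assoc]
  exact ⟨fun ⟨α, _, ⟨β, γ, h⟩, hk⟩ => ⟨α, β, γ, h ▸ hk⟩,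
    fun ⟨α, β, γ, hk⟩ => ⟨α, _, ⟨β, γ, rfl⟩, hk⟩⟩

theorem frobeniusNumber_sub_of_modEq {A : Set ℕ} {s G : ℕ} (hsA : s ∈ A) (hs : 0 < s)
    (hsG : s ≤ G) (hcover : ∀ k, ∃ w ∈ AddSubmonoid.closure A, w ≤ G ∧ w ≡ k [MOD s])
    (hmin : ∀ w ∈ AddSubmonoid.closure A, w ≡ G [MOD s] → G ≤ w) :
    FrobeniusNumber (G - s) A := by
  rw [frobeniusNumber_iff]
  refine ⟨fun h => ?_, fun k hk => ?_⟩
  · have := hmin _ h ((Nat.sub_modulus_modEq_iff hsG).2 rfl)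
    omega
  · obtain ⟨w, hw, hwG, hwk⟩ := hcover k
    have hwk' : w ≤ k := hwk.le_of_lt_add (by omega)
    obtain ⟨d, hd⟩ := (Nat.modEq_iff_dvd' hwk').1 hwk
    rw [← Nat.add_sub_cancel' hwk', hd, mul_comm, ← smul_eq_mul]
    exact add_mem hw ((AddSubmonoid.closure A).nsmul_mem (AddSubmonoid.subset_closure hsA) d)

theorem coprime_twoStepStar (a n : ℕ) : Nat.Coprime a (twoStepStar a n) := by
  rw [twoStepStar, mul_assoc, Nat.coprime_mul_left_add_right]
  exact Nat.coprime_one_right a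

theorem twoStepStar_add (a n k : ℕ) :
    twoStepStar a (n + 2 + k) = twoStepStar a (n + 2) + a * (k * (2 * n + 2 + k)) := by
  simp only [twoStepStar, Nat.add_sub_cancel, show n + 2 + k - 2 = n + k by omega]
  ring

theorem Nat.coprime_two_mul_add_three (p : ℕ) : Coprime (2 * p + 3) (4 * p + 8) := by
  refine coprime_of_mul_modEq_one (2 * p + 3) ?_
  rw [ModEq, show (2 * p + 3) * (2 * p + 3) = 1 + (4 * p + 8) * (p + 1) by ring,
    add_mul_mod_self_left]

namespace TwoStepStar

variable {p q s : ℕ}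

theorem le_weight_of_modEq (hq : 2 * p + 3 ≤ q) (hs : s = (4 * p + 8) * q + (2 * p + 5))
    {x y : ℕ} (h : (2 * p + 3) * x + (4 * p + 8) * y ≡
      (2 * p + 3) * (4 * p + 6) + (4 * p + 8) * q [MOD s]) :
    (2 * p + 3) * (4 * p + 6) + (4 * p + 8) * q ≤ (2 * p + 3) * x + (4 * p + 8) * y ∧
      4 * p + 6 + q ≤ x + y := by
  have hcop := Nat.coprime_two_mul_add_three p
  have hsum_mul :
      (4 * p + 8) * (x + y) = (2 * p + 3) * x + (4 * p + 8) * y + (2 * p + 5) * x := by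
    ring
  rcases lt_trichotomy ((2 * p + 3) * x + (4 * p + 8) * y)
    ((2 * p + 3) * (4 * p + 6) + (4 * p + 8) * q) with hlt | heq | hgt
  · -- the only smaller weight in the residue class would be the Frobenius number of `{2p+3, 4p+8}`
    exfalso
    have hstar : (2 * p + 3) * (4 * p + 6) + (4 * p + 8) * q =
        ((2 * p + 3) * (4 * p + 8) - (2 * p + 3) - (4 * p + 8)) + s := by
      have : (2 * p + 3) * (4 * p + 8) = 8 * (p * p) + 28 * p + 24 := by ring
      have : (2 * p + 3) * (4 * p + 6) = 8 * (p * p) + 24 * p + 18 := by ring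
      omega
    rw [hstar, Nat.modEq_add_modulus_iff] at h
    rw [hstar] at hlt
    have hρs : (2 * p + 3) * (4 * p + 8) - (2 * p + 3) - (4 * p + 8) < s := by
      rw [hs]
      nlinarith
    have hρ := le_antisymm (h.le_of_lt_add hlt) (h.symm.le_of_lt_add (by omega))
    refine (frobeniusNumber_pair hcop (by omega) (by omega)).1
      ((AddSubmonoid.mem_closure_pair _ _ _).2 ⟨x, y, ?_⟩)
    rw [smul_eq_mul, smul_eq_mul, mul_comm x, mul_comm y, hρ]
  · have hx : 4 * p + 6 ≤ x := by
      have hmod : (2 * p + 3) * x ≡ (2 * p + 3) * (4 * p + 6) [MOD 4 * p + 8] := by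
        have := congrArg (· % (4 * p + 8)) heq
        simp only [Nat.add_mul_mod_self_left] at this
        exact this
      have hx' : 4 * p + 6 ≡ x [MOD 4 * p + 8] :=
        (Nat.ModEq.cancel_left_of_coprime hcop.symm hmod).symm
      exact hx'.le_of_lt_add (by omega)
    have : (4 * p + 8) * (4 * p + 6 + q) ≤ (4 * p + 8) * (x + y) := by nlinarith
    exact ⟨heq.ge, Nat.le_of_mul_le_mul_left this (by omega)⟩
  · have hge := h.symm.add_le_of_lt hgt
    rw [hs] at hge
    have hlt : (4 * p + 8) * (4 * p + 5 + q) < (4 * p + 8) * (x + y) := by nlinarith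
    exact ⟨hgt.le, by linarith [Nat.lt_of_mul_lt_mul_left hlt]⟩

theorem exists_weight_modEq (hq : 2 * p + 3 ≤ q) (hs : s = (4 * p + 8) * q + (2 * p + 5))
    (r : ℕ) : ∃ x y, (2 * p + 3) * x + (4 * p + 8) * y ≡ r [MOD s] ∧
      (2 * p + 3) * x + (4 * p + 8) * y ≤ (2 * p + 3) * (4 * p + 6) + (4 * p + 8) * q ∧
      x + y ≤ 4 * p + 6 + q := by
  wlog hr : r < s generalizing r
  · obtain ⟨x, y, h, hle⟩ := this (r % s) (Nat.mod_lt _ (by omega))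
    exact ⟨x, y, h.trans (Nat.mod_modEq r s), hle⟩
  obtain ⟨x₀, hx₀, hmod⟩ :=
    Nat.exists_mul_mod_eq_of_coprime r (Nat.coprime_two_mul_add_three p) (by omega)
  change (2 * p + 3) * x₀ ≡ r [MOD 4 * p + 8] at hmod
  -- if the weight of `(x₀, ·)` overshoots `r`, then `x₀ - 1` reaches `r + s`,
  -- because `s + (2p+3) = (4p+8)(q+1)`
  rcases le_or_gt ((2 * p + 3) * x₀) r with hle | hlt
  · obtain ⟨y, hy⟩ := (Nat.modEq_iff_dvd' hle).1 hmod
    have ht : (2 * p + 3) * x₀ + (4 * p + 8) * y = r := by omega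
    rw [hs] at hr
    have hsum : (4 * p + 8) * (x₀ + y) < (4 * p + 8) * (2 * p + 5 + q) := by nlinarith
    exact ⟨x₀, y, ht ▸ rfl, by nlinarith, by linarith [Nat.lt_of_mul_lt_mul_left hsum]⟩
  · obtain ⟨x₁, rfl⟩ : ∃ x₁, x₀ = x₁ + 1 := Nat.exists_eq_add_one.2 (by nlinarith)
    have hmod' : (2 * p + 3) * x₁ ≡ r + s [MOD 4 * p + 8] :=
      calc (2 * p + 3) * x₁ ≡ (2 * p + 3) * x₁ + (4 * p + 8) * (q + 1) [MOD 4 * p + 8] :=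
            (Nat.add_modulus_mul_modEq_iff.2 rfl).symm
        _ = (2 * p + 3) * (x₁ + 1) + s := by rw [hs]; ring
        _ ≡ r + s [MOD 4 * p + 8] := hmod.add_right s
    have hle : (2 * p + 3) * x₁ ≤ r + s := by
      rw [hs]
      nlinarith
    obtain ⟨y, hy⟩ := (Nat.modEq_iff_dvd' hle).1 hmod'
    have ht : (2 * p + 3) * x₁ + (4 * p + 8) * y = r + s := by omega
    have hyq : y ≤ q := by
      have : (4 * p + 8) * y < (4 * p + 8) * (q + 1) := by rw [hs] at ht; nlinarith
      linarith [Nat.lt_of_mul_lt_mul_left this]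
    exact ⟨x₁, y, ht ▸ Nat.add_modulus_modEq_iff.2 rfl, by nlinarith, by omega⟩

theorem frobeniusNumber_of_coprime {a p q s b c : ℕ} (hq : 2 * p + 3 ≤ q)
    (hs : s = (4 * p + 8) * q + (2 * p + 5)) (hb : b = s + a * (2 * p + 3))
    (hc : c = s + a * (4 * p + 8)) (hcop : Nat.Coprime a s) :
    FrobeniusNumber ((4 * p + 6) * b + q * c - s) {s, b, c} := by
  have hcost (x y : ℕ) :
      x * b + y * c = a * ((2 * p + 3) * x + (4 * p + 8) * y) + s * (x + y) := by
    rw [hb, hc]; ring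
  have hcost_modEq (x y : ℕ) :
      x * b + y * c ≡ a * ((2 * p + 3) * x + (4 * p + 8) * y) [MOD s] := by
    rw [hcost]
    exact Nat.add_modulus_mul_modEq_iff.2 rfl
  refine frobeniusNumber_sub_of_modEq (by simp) (by omega) ?_ (fun k => ?_) ?_
  · rw [hcost]
    nlinarith
  · obtain ⟨r, -, hr⟩ := Nat.exists_mul_mod_eq_of_coprime k hcop (by omega)
    obtain ⟨x, y, hxy, ht, hsum⟩ := exists_weight_modEq hq hs r
    refine ⟨x * b + y * c, AddSubmonoid.mem_closure_triple_s5.2 ⟨0, x, y, by simp⟩, ?_,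
      (hcost_modEq x y).trans ((hxy.mul_left a).trans hr)⟩
    rw [hcost, hcost]
    gcongr
  · intro w hw hwG
    obtain ⟨α, x, y, rfl⟩ := AddSubmonoid.mem_closure_triple_s5.1 hw
    rw [add_assoc, Nat.mul_modulus_add_modEq_iff] at hwG
    obtain ⟨ht, hsum⟩ := le_weight_of_modEq hq hs <|
      Nat.ModEq.cancel_left_of_coprime hcop.symm <|
        (hcost_modEq x y).symm.trans (hwG.trans (hcost_modEq _ _))
    calc (4 * p + 6) * b + q * c ≤ x * b + y * c := by
          rw [hcost, hcost]
          gcongr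
      _ ≤ α * s + x * b + y * c := by omega

end TwoStepStar

open TwoStepStar in
theorem frobenius_twoStepStar_one_zero_general (a n : ℕ) (ha4 : a % 4 = 1) (hn : 3 ≤ n) (hn4 : n % 4 = 0) (hbig : 8 * n - 2 ≤ a * (n - 2)) :
    ∃ g : ℕ,
      FrobeniusNumber g
        {twoStepStar a n, twoStepStar a (n + 1), twoStepStar a (n + 2)} ∧
      (g : ℚ) = (4 * (n : ℚ) - 2) * twoStepStar a (n + 1) + (((a : ℚ) * ((n : ℚ) - 2) - 2) / 4) * twoStepStar a (n + 2) - twoStepStar a n := by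
  obtain ⟨p, rfl⟩ : ∃ p, n = p + 2 := ⟨n - 2, by omega⟩
  obtain ⟨q, hq⟩ : ∃ q, a * p = 4 * q + 2 := by
    have : a * p % 4 = 2 := by rw [Nat.mul_mod, ha4, show p % 4 = 2 by omega]
    exact ⟨a * p / 4, by omega⟩
  have hs : twoStepStar a (p + 2) = (4 * p + 8) * q + (2 * p + 5) := by
    rw [twoStepStar, Nat.add_sub_cancel, show a * (p + 2) * p = a * p * (p + 2) by ring, hq]
    ring
  rw [Nat.add_sub_cancel] at hbig
  have hb := twoStepStar_add a p 1
  have hc := twoStepStar_add a p 2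
  refine ⟨_, frobeniusNumber_of_coprime (by omega) hs (by rw [hb]; ring) (by rw [hc]; ring)
    (coprime_twoStepStar a _), ?_⟩
  have hqQ : (a : ℚ) * p = 4 * q + 2 := by exact_mod_cast hq
  rw [Nat.cast_sub (by rw [hb]; nlinarith)]
  push_cast
  linear_combination (-(twoStepStar a (p + 2 + 2) : ℚ) / 4) * hqQ

theorem frobenius_twoStepStar_one_zero (a n : ℕ) (ha : 5 ≤ a) (ha4 : a % 4 = 1) (hn : 3 ≤ n) (hn4 : n % 4 = 0) (hbig : 8 * n - 2 ≤ a * (n - 2)) :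
    ∃ g : ℕ,
      FrobeniusNumber g
        {twoStepStar a n, twoStepStar a (n + 1), twoStepStar a (n + 2)} ∧
      (g : ℚ) = (4 * (n : ℚ) - 2) * twoStepStar a (n + 1) + (((a : ℚ) * ((n : ℚ) - 2) - 2) / 4) * twoStepStar a (n + 2) - twoStepStar a n :=
  frobenius_twoStepStar_one_zero_general a n ha4 hn hn4 hbig
end

section
/- Let a and n be integers with a ≥ 6, a ≡ 2 (mod 4), n ≥ 3, n odd, and a(n−2) ≥ 8n−2. Then the Frobenius number of the triple {S_{a,n}, S_{a,n+1}, S_{a,n+2}} equals (4n−2)·S_{a,n+1} + ((a(n−2)−2)/4)·S_{a,n+2} − S_{a,n}. -/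
open Finset

namespace AddSubmonoid

theorem mem_closure_triple_s10 {A B C k : ℕ} :
    k ∈ closure ({A, B, C} : Set ℕ) ↔ ∃ α β γ : ℕ, α * A + β * B + γ * C = k := by
  rw [← Set.singleton_union, closure_union, mem_sup]
  simp only [mem_closure_singleton, mem_closure_pair, smul_eq_mul]
  constructor
  · rintro ⟨_, ⟨α, rfl⟩, _, ⟨β, γ, rfl⟩, rfl⟩
    exact ⟨α, β, γ, by ring⟩
  · rintro ⟨α, β, γ, rfl⟩
    exact ⟨_, ⟨α, rfl⟩, _, ⟨β, γ, rfl⟩, by ring⟩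

end AddSubmonoid

theorem frobeniusNumber_sub_of_forall_modEq {A B C M : ℕ}
    (hcover : ∀ k, ∃ x y : ℕ, x * B + y * C ≤ M ∧ x * B + y * C ≡ k [MOD A])
    (hM : M - A ∉ AddSubmonoid.closure ({A, B, C} : Set ℕ)) :
    FrobeniusNumber (M - A) {A, B, C} := by
  refine frobeniusNumber_iff.2 ⟨hM, fun k hk => ?_⟩
  obtain ⟨x, y, hle, hmod⟩ := hcover k
  obtain ⟨d, hd⟩ := (Nat.modEq_iff_exists_eq_add (hmod.le_of_lt_add (by omega))).1 hmod
  exact AddSubmonoid.mem_closure_triple_s10.2 ⟨d, x, y, by rw [hd]; ring⟩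

theorem exists_mem_modEq_of_card_eq {ι : Type*} {A : ℕ} (hA : 0 < A) {R : Finset ι}
    (hR : #R = A) (f : ι → ℕ) (hf : ∀ p ∈ R, ∀ q ∈ R, f p ≡ f q [MOD A] → p = q)
    (k : ℕ) : ∃ p ∈ R, f p ≡ k [MOD A] :=
  surjOn_of_injOn_of_card_le (s := R) (t := range A) (fun p => f p % A)
    (fun _ _ => mem_range.2 (Nat.mod_lt _ hA)) hf (by simp [hR])
    (mem_range.2 (Nat.mod_lt k hA))

theorem IsCoprime.dvd_mul_add_mul_of_dvd {A a b c B C u v : ℤ} (hcop : IsCoprime A a)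
    (hB : B = A + a * b) (hC : C = A + a * c) (h : A ∣ u * B + v * C) : A ∣ u * b + v * c := by
  refine hcop.dvd_of_dvd_mul_left ?_
  rw [show a * (u * b + v * c) = u * B + v * C - (u + v) * A by subst hB hC; ring]
  exact dvd_sub h (dvd_mul_left _ _)

section weight

variable {n m u v : ℤ}

-- `(2n-1)² - 4n(n-1) = 1` supplies the witnesses here and in `eq_of_weight_eq_modulus`.
theorem exists_of_weight_eq_zero (h : u * (2 * n - 1) + v * (4 * n) = 0) :
    ∃ k, u = 4 * n * k ∧ v = -(2 * n - 1) * k :=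
  ⟨-v * (2 * n - 1) - u * (n - 1), by linear_combination (2 * n - 1) * h,
    by linear_combination (1 - n) * h⟩

theorem eq_of_weight_eq_modulus (hn : 0 < n) (hu : |u| < 4 * n)
    (h : u * (2 * n - 1) + v * (4 * n) = 4 * n * m + 2 * n + 1) :
    u = -1 ∧ v = m + 1 ∨ u = 4 * n - 1 ∧ v = m + 2 - 2 * n := by
  obtain ⟨k, hk⟩ : 4 * n ∣ u + 1 :=
    ⟨n + (m - v) * (2 * n - 1) - (n - 1) * u, by linear_combination (2 * n - 1) * h⟩
  rw [abs_lt] at hu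
  have hk01 : k = 0 ∨ k = 1 := by
    have : 0 ≤ k := by nlinarith
    have : k ≤ 1 := by nlinarith
    omega
  have h4n : 4 * n ≠ 0 := by omega
  rcases hk01 with rfl | rfl
  · have hu : u = -1 := by linarith
    subst hu
    exact Or.inl ⟨rfl, mul_right_cancel₀ h4n (by linarith)⟩
  · have hu : u = 4 * n - 1 := by linarith
    subst hu
    exact Or.inr ⟨rfl, mul_right_cancel₀ h4n (by linarith)⟩

theorem abs_weight_lt (hn : 1 ≤ n) (hmn : 2 * n ≤ m + 1) (hu : |u| < 4 * n) (hv : |v| ≤ m) :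
    |u * (2 * n - 1) + v * (4 * n)| < 2 * (4 * n * m + 2 * n + 1) := by
  have h2n : |2 * n - 1| = 2 * n - 1 := abs_of_nonneg (by omega)
  have h4n : |4 * n| = 4 * n := abs_of_nonneg (by omega)
  calc |u * (2 * n - 1) + v * (4 * n)|
      ≤ |u| * (2 * n - 1) + |v| * (4 * n) := by
        simpa only [abs_mul, h2n, h4n] using abs_add_le (u * (2 * n - 1)) (v * (4 * n))
    _ ≤ (4 * n - 1) * (2 * n - 1) + m * (4 * n) := by gcongr <;> omega
    _ < 2 * (4 * n * m + 2 * n + 1) := by nlinarith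

-- As `uB + vC = (u + v + as)A` when `u(2n-1) + 4nv = As`, this is the minimality of
-- `M = (4n-2)B + mC` in its residue class modulo `A`.
theorem add_add_mul_nonneg_of_weight_eq {a s : ℤ} (hn : 1 ≤ n) (hmn : 2 * n ≤ m + 1)
    (ha : 1 ≤ a) (hu : -(4 * n - 2) ≤ u) (hv : -m ≤ v)
    (h : u * (2 * n - 1) + v * (4 * n) = (4 * n * m + 2 * n + 1) * s) : 0 ≤ u + v + a * s := by
  rcases lt_trichotomy s 0 with hs | rfl | hs
  · exfalso
    have hs1 : s = -1 := by
      by_contra hs1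
      have : (4 * n * m + 2 * n + 1) * s ≤ (4 * n * m + 2 * n + 1) * (-2) :=
        mul_le_mul_of_nonneg_left (by omega) (by nlinarith)
      nlinarith
    subst hs1
    have hneg : u < 0 := by nlinarith
    rcases eq_of_weight_eq_modulus (n := n) (u := -u) (v := -v) (m := m) (by omega)
      (by rw [abs_lt]; omega) (by linarith) with ⟨h1, -⟩ | ⟨h1, -⟩ <;> omega
  · obtain ⟨k, rfl, rfl⟩ := exists_of_weight_eq_zero (by simpa using h)
    have : 0 ≤ k := by nlinarith
    nlinarith
  · have hA : 8 * n * n - 2 * n + 1 ≤ 4 * n * m + 2 * n + 1 := by nlinarith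
    have h4n : 4 * n * (u + v + a * s) =
        u * (2 * n + 1) + s * (4 * n * m + 2 * n + 1 + 4 * n * a) := by
      linear_combination h
    have hu' : -(4 * n - 2) * (2 * n + 1) ≤ u * (2 * n + 1) := by nlinarith
    have hs' : 4 * n * m + 2 * n + 1 + 4 * n * a ≤ s * (4 * n * m + 2 * n + 1 + 4 * n * a) :=
      le_mul_of_one_le_left (by nlinarith) hs
    nlinarith

end weight

def aperyIndices (n m : ℕ) : Finset (ℕ × ℕ) :=
  range (4 * n - 1) ×ˢ range (m + 1) ∪ {4 * n - 1} ×ˢ range (m + 2 - 2 * n)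

section aperyIndices

variable {n m : ℕ} {p q : ℕ × ℕ}

theorem mem_aperyIndices :
    p ∈ aperyIndices n m ↔
      p.1 < 4 * n - 1 ∧ p.2 ≤ m ∨ p.1 = 4 * n - 1 ∧ p.2 < m + 2 - 2 * n := by
  simp only [aperyIndices, mem_union, mem_product, mem_range, mem_singleton, Nat.lt_succ_iff]

theorem card_aperyIndices (hn : 1 ≤ n) (hmn : 2 * n ≤ m + 2) :
    #(aperyIndices n m) = 4 * n * m + 2 * n + 1 := by
  rw [aperyIndices, card_union_of_disjoint, card_product, card_product]
  · simp only [card_range, card_singleton]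
    zify [show 1 ≤ 4 * n by omega, hmn]
    ring
  · rw [disjoint_left]
    rintro ⟨x, y⟩ hx hy
    simp only [mem_product, mem_range, mem_singleton] at hx hy
    omega

theorem mul_add_mul_le_of_mem_aperyIndices {B C : ℕ} (hBC : B ≤ C) (hn : 1 ≤ n)
    (hp : p ∈ aperyIndices n m) : p.1 * B + p.2 * C ≤ (4 * n - 2) * B + m * C := by
  rcases mem_aperyIndices.1 hp with ⟨hx, hy⟩ | ⟨hx, hy⟩
  · gcongr
    · omega
  · obtain ⟨j, rfl⟩ : ∃ j, m = p.2 + 1 + j := ⟨m - p.2 - 1, by omega⟩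
    rw [hx, show 4 * n - 1 = 4 * n - 2 + 1 by omega]
    nlinarith

theorem weight_sub_ne_modulus (hn : 1 ≤ n) (hp : p ∈ aperyIndices n m)
    (hq : q ∈ aperyIndices n m) :
    ((q.1 : ℤ) - p.1) * (2 * n - 1) + ((q.2 : ℤ) - p.2) * (4 * n) ≠
      4 * n * m + 2 * n + 1 := by
  intro h
  rw [mem_aperyIndices] at hp hq
  rcases eq_of_weight_eq_modulus (by omega) (by rw [abs_lt]; omega) h
    with ⟨-, hv⟩ | ⟨hu, hv⟩ <;> omega

theorem eq_of_dvd_weight_sub (hn : 1 ≤ n) (hmn : 2 * n ≤ m + 1) (hp : p ∈ aperyIndices n m)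
    (hq : q ∈ aperyIndices n m)
    (h : (4 * n * m + 2 * n + 1 : ℤ) ∣
      ((q.1 : ℤ) - p.1) * (2 * n - 1) + ((q.2 : ℤ) - p.2) * (4 * n)) :
    p = q := by
  have hp' := mem_aperyIndices.1 hp
  have hq' := mem_aperyIndices.1 hq
  obtain ⟨s, hs⟩ := h
  have hlt := abs_weight_lt (n := n) (m := m) (u := q.1 - p.1) (v := q.2 - p.2) (by omega)
    (by omega) (by rw [abs_lt]; omega) (by rw [abs_le]; omega)
  have hA : (0 : ℤ) < 4 * n * m + 2 * n + 1 := by positivity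
  rw [hs, abs_mul, abs_of_pos hA] at hlt
  have hs2 : |s| < 2 := by nlinarith
  rcases (show s = -1 ∨ s = 0 ∨ s = 1 by rw [abs_lt] at hs2; omega) with rfl | rfl | rfl
  · exact absurd (by linarith) (weight_sub_ne_modulus hn hq hp)
  · obtain ⟨k, hu, hv⟩ := exists_of_weight_eq_zero (by simpa using hs)
    obtain rfl : k = 0 := by
      have : |4 * (n : ℤ) * k| < 4 * n := by rw [← hu, abs_lt]; omega
      rw [abs_mul, abs_of_pos (by positivity)] at this
      exact Int.abs_lt_one_iff.1 (by nlinarith)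
    exact Prod.ext (by omega) (by rw [mul_zero] at hv; omega)
  · exact absurd (by linarith) (weight_sub_ne_modulus hn hp hq)

end aperyIndices

section modulus

variable {a n m A B C : ℕ}

theorem exists_mul_add_mul_le_modEq (hn : 1 ≤ n) (hmn : 2 * n ≤ m + 1)
    (hA : (A : ℤ) = 4 * n * m + 2 * n + 1) (hB : (B : ℤ) = A + a * (2 * n - 1))
    (hC : (C : ℤ) = A + a * (4 * n)) (hcop : IsCoprime (A : ℤ) a) (k : ℕ) :
    ∃ x y : ℕ, x * B + y * C ≤ (4 * n - 2) * B + m * C ∧ x * B + y * C ≡ k [MOD A] := by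
  have hinj : ∀ p ∈ aperyIndices n m, ∀ q ∈ aperyIndices n m,
      p.1 * B + p.2 * C ≡ q.1 * B + q.2 * C [MOD A] → p = q := by
    intro p hp q hq hpq
    refine eq_of_dvd_weight_sub hn hmn hp hq (hA ▸ hcop.dvd_mul_add_mul_of_dvd hB hC ?_)
    convert Nat.modEq_iff_dvd.1 hpq using 1
    push_cast
    ring
  have hcard : #(aperyIndices n m) = A := by
    rw [card_aperyIndices hn (by omega)]
    exact_mod_cast hA.symm
  have hA0 : 0 < A := by
    zify
    rw [hA]
    positivity
  obtain ⟨p, hp, hpk⟩ :=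
    exists_mem_modEq_of_card_eq hA0 hcard (fun p => p.1 * B + p.2 * C) hinj k
  have hBC : B ≤ C := by
    have : (a : ℤ) * (2 * n - 1) ≤ a * (4 * n) := by gcongr; omega
    zify
    linarith
  exact ⟨p.1, p.2, mul_add_mul_le_of_mem_aperyIndices hBC hn hp, hpk⟩

theorem mul_add_mul_sub_notMem_closure (hn : 1 ≤ n) (hmn : 2 * n ≤ m + 1) (ha : 1 ≤ a)
    (hA : (A : ℤ) = 4 * n * m + 2 * n + 1) (hB : (B : ℤ) = A + a * (2 * n - 1))
    (hC : (C : ℤ) = A + a * (4 * n)) (hcop : IsCoprime (A : ℤ) a) :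
    (4 * n - 2) * B + m * C - A ∉ AddSubmonoid.closure ({A, B, C} : Set ℕ) := by
  rw [AddSubmonoid.mem_closure_triple_s10]
  rintro ⟨α, β, γ, h⟩
  have hAM : A ≤ (4 * n - 2) * B + m * C := by
    have : A ≤ B := by zify; nlinarith
    exact le_add_right (this.trans (Nat.le_mul_of_pos_left _ (by omega)))
  have huv : ((β : ℤ) - (4 * n - 2)) * B + ((γ : ℤ) - m) * C = A * (-(α + 1)) := by
    zify [hAM, (by omega : 2 ≤ 4 * n)] at h
    linear_combination h
  obtain ⟨s, hs⟩ := hcop.dvd_mul_add_mul_of_dvd hB hC ⟨_, huv⟩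
  have hsum : (A : ℤ) * ((β - (4 * n - 2)) + (γ - m) + a * s) = A * (-(α + 1)) := by
    rw [← huv, hB, hC]
    linear_combination (-a : ℤ) * hs
  have hnonneg := add_add_mul_nonneg_of_weight_eq (n := n) (m := m) (a := a)
    (u := β - (4 * n - 2)) (v := γ - m) (by omega) (by omega) (by omega) (by omega) (by omega)
    (hA ▸ hs)
  have := mul_left_cancel₀ (by rw [hA]; positivity) hsum
  linarith

end modulus

theorem isCoprime_twoStepStar (a n : ℕ) : IsCoprime (twoStepStar a n : ℤ) a := by
  rw [Nat.isCoprime_iff_coprime, twoStepStar, mul_assoc, Nat.coprime_mul_left_add_left]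
  exact Nat.coprime_one_left a

theorem cast_twoStepStar_add_one (a : ℕ) {n : ℕ} (hn : 2 ≤ n) :
    (twoStepStar a (n + 1) : ℤ) = twoStepStar a n + a * (2 * n - 1) := by
  simp only [twoStepStar]
  push_cast [Nat.cast_sub hn, Nat.cast_sub (by omega : 1 ≤ n)]
  ring

theorem cast_twoStepStar_add_two (a : ℕ) {n : ℕ} (hn : 2 ≤ n) :
    (twoStepStar a (n + 2) : ℤ) = twoStepStar a n + a * (4 * n) := by
  simp only [twoStepStar]
  push_cast [Nat.cast_sub hn, Nat.cast_sub (by omega : 2 ≤ n + 2)]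
  ring

theorem frobenius_twoStepStar_two_odd_general (a n : ℕ) (ha4 : a % 4 = 2) (hn : 3 ≤ n) (hn2 : n % 2 = 1) (hbig : 8 * n - 2 ≤ a * (n - 2)) :
    ∃ g : ℕ,
      FrobeniusNumber g
        {twoStepStar a n, twoStepStar a (n + 1), twoStepStar a (n + 2)} ∧
      (g : ℚ) = (4 * (n : ℚ) - 2) * twoStepStar a (n + 1) + (((a : ℚ) * ((n : ℚ) - 2) - 2) / 4) * twoStepStar a (n + 2) - twoStepStar a n := by
  obtain ⟨m, hm⟩ : ∃ m, a * (n - 2) = 4 * m + 2 := by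
    obtain ⟨s, t, hs, ht⟩ : ∃ s t, a = 4 * s + 2 ∧ n - 2 = 2 * t + 1 :=
      ⟨a / 4, (n - 2) / 2, by omega, by omega⟩
    exact ⟨2 * s * t + s + t, by rw [hs, ht]; ring⟩
  have hA : (twoStepStar a n : ℤ) = 4 * n * m + 2 * n + 1 := by
    rw [twoStepStar, mul_comm a n, mul_assoc, hm]
    push_cast
    ring
  have hB := cast_twoStepStar_add_one a (by omega : 2 ≤ n)
  have hC := cast_twoStepStar_add_two a (by omega : 2 ≤ n)
  refine ⟨_, frobeniusNumber_sub_of_forall_modEq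
    (exists_mul_add_mul_le_modEq (by omega) (by omega) hA hB hC (isCoprime_twoStepStar a n))
    (mul_add_mul_sub_notMem_closure (by omega) (by omega) (by omega) hA hB hC
      (isCoprime_twoStepStar a n)), ?_⟩
  have hmq : ((a : ℚ) * ((n : ℚ) - 2) - 2) / 4 = m := by
    have := congrArg (Nat.cast (R := ℚ)) hm
    push_cast [Nat.cast_sub (by omega : 2 ≤ n)] at this
    linarith
  have hAM :
      twoStepStar a n ≤ (4 * n - 2) * twoStepStar a (n + 1) + m * twoStepStar a (n + 2) := by
    have : twoStepStar a n ≤ twoStepStar a (n + 1) := by zify; nlinarith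
    exact le_add_right (this.trans (Nat.le_mul_of_pos_left _ (by omega)))
  rw [hmq, Nat.cast_sub hAM]
  push_cast [Nat.cast_sub (by omega : 2 ≤ 4 * n)]
  ring

theorem frobenius_twoStepStar_two_odd (a n : ℕ) (ha : 6 ≤ a) (ha4 : a % 4 = 2) (hn : 3 ≤ n) (hn2 : n % 2 = 1) (hbig : 8 * n - 2 ≤ a * (n - 2)) :
    ∃ g : ℕ,
      FrobeniusNumber g
        {twoStepStar a n, twoStepStar a (n + 1), twoStepStar a (n + 2)} ∧
      (g : ℚ) = (4 * (n : ℚ) - 2) * twoStepStar a (n + 1) + (((a : ℚ) * ((n : ℚ) - 2) - 2) / 4) * twoStepStar a (n + 2) - twoStepStar a n :=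
  frobenius_twoStepStar_two_odd_general a n ha4 hn hn2 hbig
end

section
/- Let a and n be integers with a ≥ 7, a ≡ 3 (mod 4), n ≥ 3, n ≡ 2 (mod 4), and a(n−2) ≥ 4n. Then the Frobenius number of the triple {S_{a,n}, S_{a,n+1}, S_{a,n+2}} equals (2n−2)·S_{a,n+1} + ((a(n−2)+4n−4)/4)·S_{a,n+2} − S_{a,n}. -/
private lemma tss_closure {A B C m : ℕ} :
    m ∈ AddSubmonoid.closure ({A, B, C} : Set ℕ) ↔ ∃ x y z : ℕ, x * A + y * B + z * C = m := by
  rw [show ({A, B, C} : Set ℕ) = {A} ∪ {B, C} from rfl, AddSubmonoid.closure_union,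
    AddSubmonoid.mem_sup]
  constructor
  · rintro ⟨s, hs, t, ht, rfl⟩
    rw [AddSubmonoid.mem_closure_singleton] at hs
    rw [AddSubmonoid.mem_closure_pair] at ht
    obtain ⟨x, rfl⟩ := hs
    obtain ⟨y, z, rfl⟩ := ht
    exact ⟨x, y, z, by simp only [smul_eq_mul]; ring⟩
  · rintro ⟨x, y, z, rfl⟩
    refine ⟨x * A, ?_, y * B + z * C, ?_, by ring⟩
    · rw [AddSubmonoid.mem_closure_singleton]
      exact ⟨x, by simp [smul_eq_mul]⟩
    · rw [AddSubmonoid.mem_closure_pair]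
      exact ⟨y, z, by simp [smul_eq_mul]⟩

private lemma extract (a b u v : ℤ) (ha : 7 ≤ a) (hb : 1 ≤ b)
    (hdvd : (a*(4*b+2)*(4*b)+1) ∣ (u*(a*(4*b+3)*(4*b+1)+1) + v*(a*(4*b+4)*(4*b+2)+1))) :
    ∃ w1 w2 : ℤ, u = (16*b+8)*w2 - (8*b+5)*w1 ∧ v = ((a+4)*b+2)*w1 - (8*b+3)*w2 := by
  have hA0 : (a*(4*b+2)*(4*b)+1 : ℤ) ≠ 0 := by
    have := mul_pos (mul_pos (show (0:ℤ) < a by linarith) (show (0:ℤ) < 4*b+2 by linarith))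
      (show (0:ℤ) < 4*b by linarith)
    intro h; linarith
  obtain ⟨t, ht⟩ := hdvd
  have h1 : (a*(4*b+2)*(4*b)+1) ∣ a * ((8*b+3)*u + (16*b+8)*v) :=
    ⟨t - (u+v), by linear_combination ht⟩
  have cop_a : IsCoprime (a*(4*b+2)*(4*b)+1 : ℤ) a := ⟨1, -((4*b+2)*(4*b)), by ring⟩
  obtain ⟨w1, hw1⟩ := cop_a.dvd_of_dvd_mul_left h1
  have h3 : (a*(4*b+2)*(4*b)+1) ∣ (16*b+8) * (((a+4)*b+2)*u + (8*b+5)*v) :=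
    ⟨u + (8*b+5)*w1, by linear_combination (8*b+5) * hw1⟩
  have cop4 : IsCoprime (a*(4*b+2)*(4*b)+1 : ℤ) (16*b+8) := ⟨1, -(a*b), by ring⟩
  obtain ⟨w2, hw2⟩ := cop4.dvd_of_dvd_mul_left h3
  refine ⟨w1, w2, ?_, ?_⟩
  · apply mul_left_cancel₀ hA0
    linear_combination (16*b+8)*hw2 - (8*b+5)*hw1
  · apply mul_left_cancel₀ hA0
    linear_combination ((a+4)*b+2)*hw1 - (8*b+3)*hw2

private lemma inj_aux (a b w1 w2 x y x' y' : ℤ) (ha : 7 ≤ a) (hb : 1 ≤ b)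
    (hx0 : 0 ≤ x) (hy0 : 0 ≤ y) (hy0' : 0 ≤ y')
    (hx' : x' ≤ 16*b+7)
    (hy' : y' ≤ (a+4)*b+1)
    (hL' : 8*b+3 ≤ x' → y' ≤ (a-4)*b-2)
    (hu : x' - x = (16*b+8)*w2 - (8*b+5)*w1)
    (hv : y' - y = ((a+4)*b+2)*w1 - (8*b+3)*w2)
    (h1 : 1 ≤ w1) : False := by
  have hab : (3:ℤ)*b ≤ (a-4)*b := mul_le_mul_of_nonneg_right (by linarith) (by linarith)
  have hw21 : w2 ≤ w1 := by
    by_contra h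
    push_neg at h
    nlinarith [mul_nonneg (by linarith : (0:ℤ) ≤ 16*b+8) (by linarith : (0:ℤ) ≤ w2 - w1 - 1),
               mul_nonneg (by linarith : (0:ℤ) ≤ 8*b+3) (by linarith : (0:ℤ) ≤ w1 - 1)]
  have hw12 : w1 ≤ w2 := by
    by_contra h
    push_neg at h
    nlinarith [mul_nonneg (by linarith : (0:ℤ) ≤ 8*b+3) (by linarith : (0:ℤ) ≤ w1 - 1 - w2),
               mul_nonneg (by linarith : (0:ℤ) ≤ (a-4)*b-1) (by linarith : (0:ℤ) ≤ w1 - 1)]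
  have hw : w2 = w1 := le_antisymm hw21 hw12
  subst hw
  have hux : 8*b+3 ≤ x' := by
    nlinarith [mul_nonneg (by linarith : (0:ℤ) ≤ 8*b+3) (by linarith : (0:ℤ) ≤ w2 - 1)]
  have hys := hL' hux
  nlinarith [mul_nonneg (by linarith : (0:ℤ) ≤ (a-4)*b-1) (by linarith : (0:ℤ) ≤ w2 - 1)]

private lemma nonrep (a b x y z : ℤ) (ha : 7 ≤ a) (hb : 1 ≤ b)
    (hx : 0 ≤ x) (hy : 0 ≤ y) (hz : 0 ≤ z)
    (heq : x*(a*(4*b+2)*(4*b)+1) + y*(a*(4*b+3)*(4*b+1)+1) + z*(a*(4*b+4)*(4*b+2)+1)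
      = (8*b+2)*(a*(4*b+3)*(4*b+1)+1) + ((a+4)*b+1)*(a*(4*b+4)*(4*b+2)+1) - (a*(4*b+2)*(4*b)+1)) :
    False := by
  have hA0 : (0:ℤ) < a*(4*b+2)*(4*b)+1 := by
    have := mul_pos (mul_pos (show (0:ℤ) < a by linarith) (show (0:ℤ) < 4*b+2 by linarith))
      (show (0:ℤ) < 4*b by linarith)
    linarith
  have hab : (3:ℤ)*b ≤ (a-4)*b := mul_le_mul_of_nonneg_right (by linarith) (by linarith)
  have hab7 : (0:ℤ) ≤ (a-7)*b := mul_nonneg (by linarith) (by linarith)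
  obtain ⟨w1, w2, hu, hv⟩ := extract a b (y - (8*b+2)) (z - ((a+4)*b+1)) ha hb
    ⟨-(x+1), by linear_combination heq⟩
  have hval : (a*b+a-4*b-3)*w1 + (8*b+5)*w2 = -(x+1) := by
    apply mul_left_cancel₀ hA0.ne'
    linear_combination (-(a*(4*b+3)*(4*b+1)+1)) * hu - (a*(4*b+4)*(4*b+2)+1) * hv + heq
  have hu' : (16*b+8)*w2 - (8*b+5)*w1 ≥ -(8*b+2) := by rw [← hu]; linarith
  have hv' : ((a+4)*b+2)*w1 - (8*b+3)*w2 ≥ -((a+4)*b+1) := by rw [← hv]; linarith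
  rcases le_or_gt 0 w1 with h1 | h1
  · rcases le_or_gt 0 w2 with h2 | h2
    · nlinarith [mul_nonneg (by nlinarith : (0:ℤ) ≤ a*b+a-4*b-3) h1,
                 mul_nonneg (by linarith : (0:ℤ) ≤ 8*b+5) h2]
    · nlinarith [mul_nonneg (by linarith : (0:ℤ) ≤ 8*b+5) h1,
                 mul_nonneg (by linarith : (0:ℤ) ≤ 16*b+8) (by linarith : (0:ℤ) ≤ -1 - w2)]
  · have h1' : w1 ≤ -1 := by linarith
    have h2 : w2 ≤ -1 := by
      by_contra h
      push_neg at h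
      nlinarith [mul_nonneg (by linarith : (0:ℤ) ≤ 8*b+3) (by linarith : (0:ℤ) ≤ w2),
                 mul_nonneg (by linarith : (0:ℤ) ≤ (a+4)*b+2) (by linarith : (0:ℤ) ≤ -1 - w1)]
    have hq : w2 = -1 := by
      by_contra h
      have h2' : w2 ≤ -2 := by omega
      nlinarith [mul_nonneg (by linarith : (0:ℤ) ≤ (a+4)*b+2) (by linarith : (0:ℤ) ≤ (16*b+8)*w2 - (8*b+5)*w1 + (8*b+2)),
                 mul_nonneg (by linarith : (0:ℤ) ≤ 8*b+5) (by linarith : (0:ℤ) ≤ ((a+4)*b+2)*w1 - (8*b+3)*w2 + ((a+4)*b+1)),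
                 mul_nonneg (le_of_lt hA0) (by linarith : (0:ℤ) ≤ -2 - w2),
                 mul_nonneg hab7 (by linarith : (0:ℤ) ≤ b),
                 mul_nonneg (by linarith : (0:ℤ) ≤ b - 1) (by linarith : (0:ℤ) ≤ b)]
    subst hq
    have hp : w1 ≤ -2 := by
      by_contra h
      have h1'' : w1 = -1 := by omega
      subst h1''
      linarith
    nlinarith [mul_nonneg (by linarith : (0:ℤ) ≤ (a+4)*b+2) (by linarith : (0:ℤ) ≤ -2 - w1)]

private lemma T_facts {a b : ℕ} (ha : 7 ≤ a) (hb : 1 ≤ b) {p : ℕ × ℕ}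
    (hp : p ∈ (Finset.range (8*b+3) ×ˢ Finset.range ((a+4)*b+2)) ∪
      ((Finset.Ico (8*b+3) (16*b+8)) ×ˢ Finset.range ((a-4)*b-1))) :
    ((p.1:ℤ) ≤ 16*(b:ℤ)+7 ∧ (p.2:ℤ) ≤ ((a:ℤ)+4)*b+1 ∧
      (8*(b:ℤ)+3 ≤ (p.1:ℤ) → (p.2:ℤ) ≤ ((a:ℤ)-4)*b-2)) ∧
    p.1 * (a*(4*b+3)*(4*b+1)+1) + p.2 * (a*(4*b+4)*(4*b+2)+1)
      ≤ (8*b+2) * (a*(4*b+3)*(4*b+1)+1) + ((a+4)*b+1) * (a*(4*b+4)*(4*b+2)+1) := by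
  have haz : (7:ℤ) ≤ (a:ℤ) := by exact_mod_cast ha
  have hbz : (1:ℤ) ≤ (b:ℤ) := by exact_mod_cast hb
  have h4a : 4 ≤ a := by omega
  have h3ab : 3 ≤ (a-4)*b := by
    have h := Nat.mul_le_mul (show 3 ≤ a-4 by omega) hb
    simpa using h
  have h1ab : 1 ≤ (a-4)*b := le_trans (by norm_num) h3ab
  have hB0 : (0:ℤ) ≤ (a:ℤ)*(4*(b:ℤ)+3)*(4*(b:ℤ)+1)+1 := by positivity
  have hC0 : (0:ℤ) ≤ (a:ℤ)*(4*(b:ℤ)+4)*(4*(b:ℤ)+2)+1 := by positivity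
  simp only [Finset.mem_union, Finset.mem_product, Finset.mem_range, Finset.mem_Ico] at hp
  rcases hp with ⟨h1, h2⟩ | ⟨⟨h1a, h1b⟩, h2⟩
  · have h1z : (p.1:ℤ) < 8*(b:ℤ)+3 := by exact_mod_cast h1
    have h2z : (p.2:ℤ) < ((a:ℤ)+4)*(b:ℤ)+2 := by exact_mod_cast h2
    refine ⟨⟨by linarith, by linarith, fun h => absurd h (by linarith)⟩, ?_⟩
    zify
    nlinarith [mul_le_mul_of_nonneg_right (show (p.1:ℤ) ≤ 8*(b:ℤ)+2 by linarith) hB0,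
               mul_le_mul_of_nonneg_right (show (p.2:ℤ) ≤ ((a:ℤ)+4)*(b:ℤ)+1 by linarith) hC0]
  · have h1az : (8*(b:ℤ)+3) ≤ (p.1:ℤ) := by exact_mod_cast h1a
    have h1bz : (p.1:ℤ) < 16*(b:ℤ)+8 := by exact_mod_cast h1b
    have h2z : (p.2:ℤ) < ((a:ℤ)-4)*(b:ℤ)-1 := by
      zify [h1ab, h4a] at h2
      convert h2 using 2
    have hmono : ((a:ℤ)-4)*(b:ℤ) ≤ ((a:ℤ)+4)*(b:ℤ) :=
      mul_le_mul_of_nonneg_right (by linarith) (by linarith)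
    refine ⟨⟨by linarith, by linarith, fun _ => by linarith⟩, ?_⟩
    zify
    nlinarith [mul_le_mul_of_nonneg_right (show (p.1:ℤ) ≤ 16*(b:ℤ)+7 by linarith) hB0,
               mul_le_mul_of_nonneg_right (show (p.2:ℤ) ≤ ((a:ℤ)-4)*(b:ℤ)-2 by linarith) hC0,
               mul_nonneg (mul_nonneg (show (0:ℤ) ≤ (a:ℤ)-7 by linarith) (show (0:ℤ) ≤ (b:ℤ) by linarith)) (show (0:ℤ) ≤ (b:ℤ) by linarith),
               mul_nonneg (show (0:ℤ) ≤ (a:ℤ)-7 by linarith) (show (0:ℤ) ≤ (b:ℤ) by linarith),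
               mul_nonneg (show (0:ℤ) ≤ (b:ℤ)-1 by linarith) (show (0:ℤ) ≤ (b:ℤ) by linarith)]

set_option maxHeartbeats 2000000 in
theorem frobenius_twoStepStar_three_two (a n : ℕ) (ha : 7 ≤ a) (ha4 : a % 4 = 3) (hn : 3 ≤ n) (hn4 : n % 4 = 2) (hbig : 4 * n ≤ a * (n - 2)) :
    ∃ g : ℕ,
      FrobeniusNumber g
        {twoStepStar a n, twoStepStar a (n + 1), twoStepStar a (n + 2)} ∧
      (g : ℚ) = (2 * (n : ℚ) - 2) * twoStepStar a (n + 1) + (((a : ℚ) * ((n : ℚ) - 2) + 4 * (n : ℚ) - 4) / 4) * twoStepStar a (n + 2) - twoStepStar a n := by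
  obtain ⟨b, rfl⟩ : ∃ b, n = 4*b+2 := ⟨n/4, by omega⟩
  have hb : 1 ≤ b := by omega
  have haz : (7:ℤ) ≤ (a:ℤ) := by exact_mod_cast ha
  have hbz : (1:ℤ) ≤ (b:ℤ) := by exact_mod_cast hb
  have hAe : twoStepStar a (4*b+2) = a*(4*b+2)*(4*b)+1 := by
    unfold twoStepStar; rw [show 4*b+2-2 = 4*b from by omega]
  have hBe : twoStepStar a (4*b+2+1) = a*(4*b+3)*(4*b+1)+1 := by
    unfold twoStepStar; rw [show 4*b+2+1 = 4*b+3 from by omega, show 4*b+3-2 = 4*b+1 from by omega]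
  have hCe : twoStepStar a (4*b+2+2) = a*(4*b+4)*(4*b+2)+1 := by
    unfold twoStepStar; rw [show 4*b+2+2 = 4*b+4 from by omega, show 4*b+4-2 = 4*b+2 from by omega]
  rw [hAe, hBe, hCe]
  have h4a : 4 ≤ a := by omega
  have h3ab : 3 ≤ (a-4)*b := by
    have h := Nat.mul_le_mul (show 3 ≤ a-4 by omega) hb
    simpa using h
  have h1ab : 1 ≤ (a-4)*b := le_trans (by norm_num) h3ab
  -- A ≤ S
  have hAC : a*(4*b+2)*(4*b)+1 ≤ a*(4*b+4)*(4*b+2)+1 :=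
    Nat.add_le_add_right (Nat.mul_le_mul (Nat.mul_le_mul_left a (by omega)) (by omega)) 1
  have hAS : a*(4*b+2)*(4*b)+1
      ≤ (8*b+2)*(a*(4*b+3)*(4*b+1)+1) + ((a+4)*b+1)*(a*(4*b+4)*(4*b+2)+1) := by
    calc a*(4*b+2)*(4*b)+1 ≤ a*(4*b+4)*(4*b+2)+1 := hAC
    _ ≤ ((a+4)*b+1)*(a*(4*b+4)*(4*b+2)+1) := Nat.le_mul_of_pos_left _ (by positivity)
    _ ≤ _ := Nat.le_add_left _ _
  haveI : NeZero (a*(4*b+2)*(4*b)+1) := ⟨Nat.succ_ne_zero _⟩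
  -- the Apery staircase
  set T : Finset (ℕ×ℕ) := (Finset.range (8*b+3) ×ˢ Finset.range ((a+4)*b+2)) ∪
    ((Finset.Ico (8*b+3) (16*b+8)) ×ˢ Finset.range ((a-4)*b-1)) with hT
  have hcard : T.card = a*(4*b+2)*(4*b)+1 := by
    rw [hT, Finset.card_union_of_disjoint, Finset.card_product, Finset.card_product,
      Finset.card_range, Finset.card_range, Finset.card_range, Nat.card_Ico]
    · zify [h4a, h1ab, show 8*b+3 ≤ 16*b+8 from by omega]
      ring
    · refine Finset.disjoint_left.mpr ?_
      intro p hp1 hp2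
      simp only [Finset.mem_product, Finset.mem_range, Finset.mem_Ico] at hp1 hp2
      omega
  have hinj : Set.InjOn
      (fun p : ℕ×ℕ => ((p.1 * (a*(4*b+3)*(4*b+1)+1) + p.2 * (a*(4*b+4)*(4*b+2)+1) : ℕ) :
        ZMod (a*(4*b+2)*(4*b)+1))) ↑T := by
    intro p hp q hq hfp
    simp only [Finset.mem_coe] at hp hq
    have hpf := (T_facts ha hb (hT ▸ hp)).1
    have hqf := (T_facts ha hb (hT ▸ hq)).1
    simp only at hfp
    have hmod := (ZMod.natCast_eq_natCast_iff _ _ _).mp hfp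
    obtain ⟨t, ht⟩ := hmod.dvd
    have hdvd : ((a:ℤ)*(4*(b:ℤ)+2)*(4*(b:ℤ))+1) ∣
        (((q.1:ℤ) - p.1)*((a:ℤ)*(4*(b:ℤ)+3)*(4*(b:ℤ)+1)+1)
          + ((q.2:ℤ) - p.2)*((a:ℤ)*(4*(b:ℤ)+4)*(4*(b:ℤ)+2)+1)) := by
      refine ⟨t, ?_⟩
      push_cast at ht ⊢
      linear_combination ht
    obtain ⟨w1, w2, hu, hv⟩ := extract (a:ℤ) (b:ℤ) _ _ haz hbz hdvd
    rcases lt_trichotomy w1 0 with hw | hw | hw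
    · exact absurd (inj_aux (a:ℤ) (b:ℤ) (-w1) (-w2) q.1 q.2 p.1 p.2 haz hbz
        (by positivity) (by positivity) (by positivity)
        hpf.1 hpf.2.1 hpf.2.2
        (by linear_combination -hu) (by linear_combination -hv) (by linarith)) (fun h => h)
    · subst hw
      have hu0 : (q.1:ℤ) - p.1 = (16*(b:ℤ)+8)*w2 := by linarith [hu]
      have hw2 : w2 = 0 := by
        rcases lt_trichotomy w2 0 with h2 | h2 | h2
        · nlinarith [mul_nonneg (show (0:ℤ) ≤ 16*(b:ℤ)+8 by linarith)
            (show (0:ℤ) ≤ -1 - w2 by linarith), hpf.1,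
            show (0:ℤ) ≤ (q.1:ℤ) by positivity]
        · exact h2
        · nlinarith [mul_nonneg (show (0:ℤ) ≤ 16*(b:ℤ)+8 by linarith)
            (show (0:ℤ) ≤ w2 - 1 by linarith), hqf.1,
            show (0:ℤ) ≤ (p.1:ℤ) by positivity]
      subst hw2
      have hx : (p.1:ℤ) = q.1 := by linarith [hu0]
      have hy : (p.2:ℤ) = q.2 := by linarith [hv]
      have : p.1 = q.1 := by exact_mod_cast hx
      have : p.2 = q.2 := by exact_mod_cast hy
      exact Prod.ext ‹p.1 = q.1› ‹p.2 = q.2›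
    · exact absurd (inj_aux (a:ℤ) (b:ℤ) w1 w2 p.1 p.2 q.1 q.2 haz hbz
        (by positivity) (by positivity) (by positivity)
        hqf.1 hqf.2.1 hqf.2.2 hu hv (by linarith)) (fun h => h)
  have hsurj : ∀ m : ℕ, ∃ p, p ∈ T ∧
      ((p.1 * (a*(4*b+3)*(4*b+1)+1) + p.2 * (a*(4*b+4)*(4*b+2)+1) : ℕ) :
        ZMod (a*(4*b+2)*(4*b)+1)) = (m : ZMod (a*(4*b+2)*(4*b)+1)) := by
    intro m
    have himg : T.image (fun p : ℕ×ℕ =>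
        ((p.1 * (a*(4*b+3)*(4*b+1)+1) + p.2 * (a*(4*b+4)*(4*b+2)+1) : ℕ) :
          ZMod (a*(4*b+2)*(4*b)+1))) = Finset.univ := by
      apply Finset.eq_univ_of_card
      rw [Finset.card_image_of_injOn hinj, hcard, ZMod.card]
    have hm : (m : ZMod (a*(4*b+2)*(4*b)+1)) ∈ T.image (fun p : ℕ×ℕ =>
        ((p.1 * (a*(4*b+3)*(4*b+1)+1) + p.2 * (a*(4*b+4)*(4*b+2)+1) : ℕ) :
          ZMod (a*(4*b+2)*(4*b)+1))) := by
      rw [himg]; exact Finset.mem_univ _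
    obtain ⟨p, hp, hfp⟩ := Finset.mem_image.mp hm
    exact ⟨p, hp, hfp⟩
  -- representability of everything above g
  have hrep : ∀ m : ℕ,
      (8*b+2)*(a*(4*b+3)*(4*b+1)+1) + ((a+4)*b+1)*(a*(4*b+4)*(4*b+2)+1) - (a*(4*b+2)*(4*b)+1) < m →
      ∃ x y z : ℕ, x*(a*(4*b+2)*(4*b)+1) + y*(a*(4*b+3)*(4*b+1)+1) + z*(a*(4*b+4)*(4*b+2)+1) = m := by
    intro m hm
    obtain ⟨p, hpT, hfp⟩ := hsurj m
    have hval := (T_facts ha hb (hT ▸ hpT)).2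
    have hmod : p.1 * (a*(4*b+3)*(4*b+1)+1) + p.2 * (a*(4*b+4)*(4*b+2)+1) ≡ m
        [MOD (a*(4*b+2)*(4*b)+1)] := (ZMod.natCast_eq_natCast_iff _ _ _).mp hfp
    have hvm : p.1 * (a*(4*b+3)*(4*b+1)+1) + p.2 * (a*(4*b+4)*(4*b+2)+1) ≤ m := by
      by_contra h
      push_neg at h
      have hd := (Nat.modEq_iff_dvd' (le_of_lt h)).mp hmod.symm
      have hle := Nat.le_of_dvd (by omega) hd
      omega
    obtain ⟨t, ht⟩ := (Nat.modEq_iff_dvd' hvm).mp hmod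
    refine ⟨t, p.1, p.2, ?_⟩
    have := Nat.eq_add_of_sub_eq hvm ht
    rw [this]
    ring
  -- non-representability of g
  have hg_not : (8*b+2)*(a*(4*b+3)*(4*b+1)+1) + ((a+4)*b+1)*(a*(4*b+4)*(4*b+2)+1) - (a*(4*b+2)*(4*b)+1)
      ∉ AddSubmonoid.closure ({a*(4*b+2)*(4*b)+1, a*(4*b+3)*(4*b+1)+1, a*(4*b+4)*(4*b+2)+1} : Set ℕ) := by
    intro hmem
    obtain ⟨x, y, z, hxyz⟩ := tss_closure.mp hmem
    refine nonrep (a:ℤ) (b:ℤ) x y z haz hbz (by positivity) (by positivity) (by positivity) ?_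
    have hc := congrArg (fun t : ℕ => (t : ℤ)) hxyz
    rw [Nat.cast_sub hAS] at hc
    push_cast at hc ⊢
    linear_combination hc
  refine ⟨(8*b+2)*(a*(4*b+3)*(4*b+1)+1) + ((a+4)*b+1)*(a*(4*b+4)*(4*b+2)+1) - (a*(4*b+2)*(4*b)+1),
    ⟨hg_not, ?_⟩, ?_⟩
  · intro m hm
    by_contra hlt
    push_neg at hlt
    exact hm (tss_closure.mpr (hrep m hlt))
  · rw [Nat.cast_sub hAS]
    push_cast
    ring
end

section
/- Let a and n be integers with a ≥ 7, a ≡ 3 (mod 4), n ≥ 3, n ≡ 3 (mod 4), and a(n−2) ≥ 2n+1. Then the Frobenius number of the triple {S_{a,n}, S_{a,n+1}, S_{a,n+2}} equals (4n−1)·S_{a,n+1} + ((a(n−2)−2n−1)/4)·S_{a,n+2} − S_{a,n}. -/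
/-!
Write `A, B, C` for the three star numbers, `a = 4r + 7`, `n = 4t + 3` and
`p = 4rt + r + 5t + 1 = (a(n - 2) - 2n + 3) / 4`. Some `xB + yC` is `1` modulo `A`, and the
relations `4n·B = (2n + 1)·A + (2n - 1)·C`, `(n - 1)·B + p·C = κ·A`, `(p + 2n - 1)·C = μ·A + (3n + 1)·B`
with `κ, μ > 0` move any `(x, y)` into the L-shaped region
`[0, 4n) × [0, p) ∪ [0, n - 1) × [p, p + 2n - 1)` without changing `xB + yC` modulo `A` or
increasing it. That region has exactly `A` points, so its values form the Apéry set of `{A, B, C}`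
with respect to `A`, and the Frobenius number is their maximum `(4n - 1)·B + (p - 1)·C` minus `A`.
-/

open Finset

def linComb (B C : ℕ) (z : ℕ × ℕ) : ℕ := z.1 * B + z.2 * C

section LinComb

variable {B C : ℕ}

theorem linComb_add (z z' : ℕ × ℕ) :
    linComb B C (z + z') = linComb B C z + linComb B C z' := by
  simp only [linComb, Prod.fst_add, Prod.snd_add]
  ring

theorem linComb_smul (c : ℕ) (z : ℕ × ℕ) : linComb B C (c • z) = c * linComb B C z := by
  simp only [linComb, Prod.smul_fst, Prod.smul_snd, smul_eq_mul]
  ring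

theorem linComb_mono : Monotone (linComb B C) := fun _ _ h => by
  unfold linComb
  gcongr
  exacts [h.1, h.2]

theorem mem_closure_triple_iff {A k : ℕ} :
    k ∈ AddSubmonoid.closure ({A, B, C} : Set ℕ) ↔ ∃ c z, c * A + linComb B C z = k := by
  rw [← Set.singleton_union, AddSubmonoid.closure_union, AddSubmonoid.mem_sup]
  simp only [AddSubmonoid.mem_closure_singleton, AddSubmonoid.mem_closure_pair, smul_eq_mul,
    linComb, Prod.exists]
  constructor
  · rintro ⟨_, ⟨c, rfl⟩, _, ⟨x, y, rfl⟩, rfl⟩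
    exact ⟨c, x, y, by ring⟩
  · rintro ⟨c, x, y, rfl⟩
    exact ⟨_, ⟨c, rfl⟩, _, ⟨x, y, rfl⟩, by ring⟩

theorem exists_lt_modEq_of_relation {A c : ℕ} {z₀ z₁ z : ℕ × ℕ}
    (hrel : linComb B C z₀ = c * A + linComb B C z₁) (hc : 0 < c * A) (hz : z₀ ≤ z) :
    ∃ z', linComb B C z' < linComb B C z ∧ linComb B C z' ≡ linComb B C z [MOD A] := by
  have hsplit : linComb B C z = linComb B C (z - z₀ + z₁) + c * A := by
    rw [linComb_add, ← tsub_add_cancel_of_le hz, linComb_add, add_tsub_cancel_right, hrel]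
    ring
  refine ⟨z - z₀ + z₁, by omega, ?_⟩
  rw [hsplit]
  exact (Nat.add_mul_mod_self_right _ _ _).symm

end LinComb

theorem exists_mem_le_modEq_of_descent {α : Type*} (f : α → ℕ) {A : ℕ} {L : Set α}
    (hstep : ∀ z ∉ L, ∃ z', f z' < f z ∧ f z' ≡ f z [MOD A]) (z : α) :
    ∃ z' ∈ L, f z' ≤ f z ∧ f z' ≡ f z [MOD A] := by
  induction hz : f z using Nat.strong_induction_on generalizing z with
  | _ v ih =>
    subst hz
    by_cases hL : z ∈ L
    · exact ⟨z, hL, le_rfl, rfl⟩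
    obtain ⟨z', hlt, hmod⟩ := hstep z hL
    obtain ⟨z'', hL'', hle, hmod'⟩ := ih _ hlt z' rfl
    exact ⟨z'', hL'', hle.trans hlt.le, hmod'.trans hmod⟩

section Apery

variable {A B C : ℕ} {L : Finset (ℕ × ℕ)}

theorem exists_mem_modEq_of_modEq_one (hunit : ∃ z, linComb B C z ≡ 1 [MOD A])
    (hreduce : ∀ z, ∃ z' ∈ L, linComb B C z' ≤ linComb B C z ∧
      linComb B C z' ≡ linComb B C z [MOD A]) (r : ℕ) :
    ∃ z ∈ L, linComb B C z ≡ r [MOD A] := by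
  obtain ⟨z₀, hz₀⟩ := hunit
  obtain ⟨z, hz, -, hmod⟩ := hreduce (r • z₀)
  refine ⟨z, hz, hmod.trans ?_⟩
  rw [linComb_smul]
  simpa using hz₀.mul_left r

theorem injOn_linComb_mod (hcard : #L ≤ A) (hsurj : ∀ r, ∃ z ∈ L, linComb B C z ≡ r [MOD A]) :
    Set.InjOn (fun z => linComb B C z % A) L := by
  refine Finset.injOn_of_surjOn_of_card_le _ (t := range A) ?_ ?_ (by simpa using hcard)
  · intro z hz
    have : 0 < A := (Finset.card_pos.mpr ⟨z, hz⟩).trans_le hcard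
    simpa using Nat.mod_lt _ this
  · intro r hr
    obtain ⟨z, hz, hmod⟩ := hsurj r
    exact ⟨z, hz, Eq.trans hmod (Nat.mod_eq_of_lt (Finset.mem_range.mp hr))⟩

theorem frobeniusNumber_triple_of_apery (hcard : #L = A)
    (hunit : ∃ z, linComb B C z ≡ 1 [MOD A])
    (hreduce : ∀ z, ∃ z' ∈ L, linComb B C z' ≤ linComb B C z ∧
      linComb B C z' ≡ linComb B C z [MOD A])
    {m : ℕ × ℕ} (hm : m ∈ L) (hmax : ∀ z ∈ L, linComb B C z ≤ linComb B C m)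
    {g : ℕ} (hg : g + A = linComb B C m) :
    FrobeniusNumber g {A, B, C} := by
  have hA : 0 < A := hcard ▸ Finset.card_pos.mpr ⟨m, hm⟩
  have hsurj := exists_mem_modEq_of_modEq_one hunit hreduce
  simp only [frobeniusNumber_iff, mem_closure_triple_iff]
  refine ⟨?_, fun k hk => ?_⟩
  · rintro ⟨c, z, rfl⟩
    obtain ⟨z', hz', hle, hmod⟩ := hreduce z
    have hmz : linComb B C m = linComb B C z + (c + 1) * A := by rw [← hg]; ring
    have hmodm : linComb B C z' ≡ linComb B C m [MOD A] := by
      rw [hmz]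
      exact hmod.trans (Nat.add_mul_mod_self_right _ _ _).symm
    obtain rfl : z' = m := injOn_linComb_mod hcard.le hsurj hz' hm hmodm
    nlinarith
  · obtain ⟨z, hz, hmod⟩ := hsurj k
    have hle : linComb B C z ≤ k := hmod.le_of_lt_add (by linarith [hmax z hz])
    obtain ⟨c, hc⟩ := (Nat.modEq_iff_dvd' hle).mp hmod
    exact ⟨c, z, by rw [mul_comm, ← hc]; omega⟩

end Apery

def lShape (u w h k : ℕ) : Finset (ℕ × ℕ) := range u ×ˢ range w ∪ range h ×ˢ Ico w (w + k)

section LShape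

variable {u w h k : ℕ}

theorem mem_lShape {z : ℕ × ℕ} :
    z ∈ lShape u w h k ↔ z.1 < u ∧ z.2 < w ∨ z.1 < h ∧ w ≤ z.2 ∧ z.2 < w + k := by
  simp [lShape]

theorem card_lShape : #(lShape u w h k) = u * w + h * k := by
  rw [lShape, card_union_of_disjoint, card_product, card_product, card_range, card_range,
    card_range, Nat.card_Ico, add_tsub_cancel_left]
  simp only [disjoint_left, mem_product, mem_range, mem_Ico]
  omega

theorem linComb_le_of_mem_lShape {B C : ℕ} (hhu : h ≤ u) (hk : k * C ≤ (u - h) * B)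
    {z : ℕ × ℕ} (hz : z ∈ lShape u w h k) : linComb B C z ≤ linComb B C (u - 1, w - 1) := by
  rcases mem_lShape.mp hz with ⟨hx, hy⟩ | ⟨hx, -, hy⟩
  · exact linComb_mono (show z ≤ (u - 1, w - 1) from ⟨by omega, by omega⟩)
  · calc linComb B C z ≤ linComb B C (h - 1, w - 1 + k) :=
          linComb_mono (show z ≤ _ from ⟨by omega, by omega⟩)
      _ ≤ (h - 1) * B + (u - h) * B + (w - 1) * C := by
          simp only [linComb, add_mul]
          linarith
      _ = linComb B C (u - 1, w - 1) := by
          rw [linComb, ← add_mul, show h - 1 + (u - h) = u - 1 by omega]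

theorem exists_lt_modEq_of_not_mem_lShape {A B C c₁ c₂ c₃ : ℕ} {z₁ z₂ z₃ : ℕ × ℕ}
    (hA : 0 < A) (hc₁ : 0 < c₁) (hc₂ : 0 < c₂) (hc₃ : 0 < c₃)
    (hrel₁ : linComb B C (u, 0) = c₁ * A + linComb B C z₁)
    (hrel₂ : linComb B C (h, w) = c₂ * A + linComb B C z₂)
    (hrel₃ : linComb B C (0, w + k) = c₃ * A + linComb B C z₃)
    {z : ℕ × ℕ} (hz : z ∉ lShape u w h k) :
    ∃ z', linComb B C z' < linComb B C z ∧ linComb B C z' ≡ linComb B C z [MOD A] := by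
  rw [mem_lShape] at hz
  by_cases hx : u ≤ z.1
  · exact exists_lt_modEq_of_relation hrel₁ (by positivity) ⟨hx, by simp⟩
  by_cases hx' : h ≤ z.1
  · exact exists_lt_modEq_of_relation hrel₂ (by positivity) ⟨hx', by omega⟩
  · exact exists_lt_modEq_of_relation hrel₃ (by positivity) ⟨by simp, by omega⟩

end LShape

section TwoStepStar

variable {a n : ℕ}

theorem twoStepStar_pos : 0 < twoStepStar a n := Nat.succ_pos _

theorem twoStepStar_monotone (a : ℕ) : Monotone (twoStepStar a) := fun _ _ h => by
  unfold twoStepStar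
  gcongr

theorem twoStepStar_relation_one (hn : 2 ≤ n) :
    4 * n * twoStepStar a (n + 1) =
      (2 * n + 1) * twoStepStar a n + (2 * n - 1) * twoStepStar a (n + 2) := by
  simp only [twoStepStar, Nat.add_sub_cancel]
  zify [hn, show 2 ≤ n + 1 by omega, show 1 ≤ 2 * n by omega]
  ring

theorem twoStepStar_mul_le (hn : 3 ≤ n) :
    (2 * n - 1) * twoStepStar a (n + 2) ≤ (3 * n + 1) * twoStepStar a (n + 1) := by
  obtain ⟨m, rfl⟩ := Nat.exists_eq_add_of_le' hn
  have key : (3 * (m + 3) + 1) * twoStepStar a (m + 3 + 1) =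
      (2 * (m + 3) - 1) * twoStepStar a (m + 3 + 2) +
        a * (m ^ 3 + 7 * m ^ 2 + 14 * m + 5) + m + 5 := by
    simp only [twoStepStar, Nat.add_sub_cancel]
    zify [show 2 ≤ m + 3 + 1 by omega, show 1 ≤ 2 * (m + 3) by omega]
    ring
  omega

/-- With `A = S_{a,n}`: `(2n - 1)·S_{a,n+1} - (n - 1)·S_{a,n+2} = a + nA` and
`a·n(n - 2) = A - 1`. -/
theorem exists_linComb_twoStepStar_modEq_one (hn : 2 ≤ n) :
    ∃ z, linComb (twoStepStar a (n + 1)) (twoStepStar a (n + 2)) z ≡ 1 [MOD twoStepStar a n] := by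
  refine ⟨(n * (n - 2) * (2 * n - 1) * (a * n * (n - 2)), n * (n - 2) * (n - 1)), ?_⟩
  refine (Nat.modEq_iff_dvd.mpr
    ⟨n * (n - 2) * (2 * n - 1) * twoStepStar a (n + 1) - n ^ 2 * (n - 2) - 1, ?_⟩).symm
  simp only [linComb, twoStepStar, Nat.add_sub_cancel]
  push_cast [hn, show 2 ≤ n + 1 by omega, show 1 ≤ 2 * n by omega, show 1 ≤ n by omega]
  ring

variable {r t : ℕ}

theorem twoStepStar_relation_two (ha : a = 4 * r + 7) (hn : n = 4 * t + 3) :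
    (n - 1) * twoStepStar a (n + 1) + (4 * r * t + r + 5 * t + 1) * twoStepStar a (n + 2) =
      (4 * r * t + 5 * r + 9 * t + 10) * twoStepStar a n := by
  subst ha hn
  simp only [twoStepStar, Nat.add_sub_cancel]
  zify [show 2 ≤ 4 * t + 3 by omega, show 2 ≤ 4 * t + 3 + 1 by omega,
    show 1 ≤ 4 * t + 3 by omega]
  ring

theorem twoStepStar_relation_three (ha : a = 4 * r + 7) (hn : n = 4 * t + 3) :
    (4 * r * t + r + 5 * t + 1 + (2 * n - 1)) * twoStepStar a (n + 2) =
      (4 * r * t + 5 * r + t + 3) * twoStepStar a n + (3 * n + 1) * twoStepStar a (n + 1) := by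
  subst ha hn
  simp only [twoStepStar, Nat.add_sub_cancel]
  zify [show 2 ≤ 4 * t + 3 by omega, show 2 ≤ 4 * t + 3 + 1 by omega,
    show 1 ≤ 2 * (4 * t + 3) by omega]
  ring

theorem twoStepStar_eq_card_lShape (ha : a = 4 * r + 7) (hn : n = 4 * t + 3) :
    #(lShape (4 * n) (4 * r * t + r + 5 * t + 1) (n - 1) (2 * n - 1)) = twoStepStar a n := by
  rw [card_lShape]
  subst ha hn
  simp only [twoStepStar]
  zify [show 2 ≤ 4 * t + 3 by omega, show 1 ≤ 4 * t + 3 by omega,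
    show 1 ≤ 2 * (4 * t + 3) by omega]
  ring

theorem exists_mem_lShape_le_modEq_twoStepStar (ha : a = 4 * r + 7) (hn : n = 4 * t + 3)
    (z : ℕ × ℕ) :
    ∃ z' ∈ lShape (4 * n) (4 * r * t + r + 5 * t + 1) (n - 1) (2 * n - 1),
      linComb (twoStepStar a (n + 1)) (twoStepStar a (n + 2)) z' ≤
        linComb (twoStepStar a (n + 1)) (twoStepStar a (n + 2)) z ∧
      linComb (twoStepStar a (n + 1)) (twoStepStar a (n + 2)) z' ≡
        linComb (twoStepStar a (n + 1)) (twoStepStar a (n + 2)) z [MOD twoStepStar a n] := by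
  have hrel₁ := twoStepStar_relation_one (a := a) (n := n) (by omega)
  have hrel₂ := twoStepStar_relation_two ha hn
  have hrel₃ := twoStepStar_relation_three ha hn
  refine exists_mem_le_modEq_of_descent _ (fun z hz => ?_) z
  refine exists_lt_modEq_of_not_mem_lShape (c₁ := 2 * n + 1) (z₁ := (0, 2 * n - 1))
    (c₂ := 4 * r * t + 5 * r + 9 * t + 10) (z₂ := 0)
    (c₃ := 4 * r * t + 5 * r + t + 3) (z₃ := (3 * n + 1, 0))
    twoStepStar_pos (by omega) (by omega) (by omega) ?_ ?_ ?_ hz <;>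
  simpa [linComb]

end TwoStepStar

theorem frobenius_twoStepStar_three_three_general (a n : ℕ) (ha : 7 ≤ a) (ha4 : a % 4 = 3) (hn4 : n % 4 = 3) :
    ∃ g : ℕ,
      FrobeniusNumber g
        {twoStepStar a n, twoStepStar a (n + 1), twoStepStar a (n + 2)} ∧
      (g : ℚ) = (4 * (n : ℚ) - 1) * twoStepStar a (n + 1) + (((a : ℚ) * ((n : ℚ) - 2) - 2 * (n : ℚ) - 1) / 4) * twoStepStar a (n + 2) - twoStepStar a n := by
  obtain ⟨r, hr⟩ : ∃ r, a = 4 * r + 7 := ⟨(a - 7) / 4, by omega⟩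
  obtain ⟨t, ht⟩ : ∃ t, n = 4 * t + 3 := ⟨n / 4, by omega⟩
  set A := twoStepStar a n
  set B := twoStepStar a (n + 1)
  set C := twoStepStar a (n + 2)
  set p := 4 * r * t + r + 5 * t + 1
  have hmax : ∀ z ∈ lShape (4 * n) p (n - 1) (2 * n - 1),
      linComb B C z ≤ linComb B C (4 * n - 1, p - 1) := fun z hz =>
    linComb_le_of_mem_lShape (by omega)
      (by rw [show 4 * n - (n - 1) = 3 * n + 1 by omega]; exact twoStepStar_mul_le (by omega)) hz
  have hAm : A ≤ linComb B C (4 * n - 1, p - 1) :=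
    calc A ≤ B := twoStepStar_monotone a (by omega)
      _ ≤ (4 * n - 1) * B := Nat.le_mul_of_pos_left B (by omega)
      _ ≤ linComb B C (4 * n - 1, p - 1) := Nat.le_add_right _ _
  refine ⟨linComb B C (4 * n - 1, p - 1) - A, frobeniusNumber_triple_of_apery
    (twoStepStar_eq_card_lShape hr ht) (exists_linComb_twoStepStar_modEq_one (by omega))
    (exists_mem_lShape_le_modEq_twoStepStar hr ht) (mem_lShape.mpr (Or.inl ⟨by omega, by omega⟩))
    hmax (Nat.sub_add_cancel hAm), ?_⟩
  have hp : ((p - 1 : ℕ) : ℚ) = (a * (n - 2) - 2 * n - 1) / 4 := by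
    simp only [p, hr, ht, Nat.add_sub_cancel]
    push_cast
    ring
  rw [Nat.cast_sub hAm, linComb, Nat.cast_add, Nat.cast_mul, Nat.cast_mul, hp,
    Nat.cast_sub (by omega : 1 ≤ 4 * n)]
  push_cast
  ring

theorem frobenius_twoStepStar_three_three (a n : ℕ) (ha : 7 ≤ a) (ha4 : a % 4 = 3) (hn : 3 ≤ n) (hn4 : n % 4 = 3) (hbig : 2 * n + 1 ≤ a * (n - 2)) :
    ∃ g : ℕ,
      FrobeniusNumber g
        {twoStepStar a n, twoStepStar a (n + 1), twoStepStar a (n + 2)} ∧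
      (g : ℚ) = (4 * (n : ℚ) - 1) * twoStepStar a (n + 1) + (((a : ℚ) * ((n : ℚ) - 2) - 2 * (n : ℚ) - 1) / 4) * twoStepStar a (n + 2) - twoStepStar a n :=
  frobenius_twoStepStar_three_three_general a n ha ha4 hn4
end
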